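/- arXiv:math/0701261 — 5 statements merged into one kernel-verified Lean document; each statement's English description precedes it below -/
import Mathlib

section
/- The function d(α) := min over stopping times T ≤ κ with P(T<S) ≤ α of E(T−S)^+ is convex and piecewise linear in α ∈ [0,1], and its break-points are achieved by non-randomized stopping times. -/
open Finset
open scoped Classical

noncomputable section

variable {Ω : Type*} [Fintype Ω] {𝒳 : Type*} {𝒴 : Type*}

/-- Probability of an event under weights `p` on a finite sample space. -/
def prW (p : Ω → ℝ) (A : Ω → Prop) : ℝ := ∑ ω, if A ω then p ω else 0

/-- Expectation under weights `p`. -/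
def exW (p : Ω → ℝ) (f : Ω → ℝ) : ℝ := ∑ ω, p ω * f ω

/-- `p` is a probability weight function. -/
def IsProbW (p : Ω → ℝ) : Prop := (∀ ω, 0 ≤ p ω) ∧ ∑ ω, p ω = 1

/-- Conditional probability `P(A | B)`. -/
def cprW (p : Ω → ℝ) (A B : Ω → Prop) : ℝ := prW p (fun ω => A ω ∧ B ω) / prW p B

/-- Conditional expectation `E(f | B)`. -/
def cexW (p : Ω → ℝ) (f : Ω → ℝ) (B : Ω → Prop) : ℝ :=
  (∑ ω, if B ω then p ω * f ω else 0) / prW p B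

/-- positive part of a real number -/
def posP (x : ℝ) : ℝ := max x 0

/-- `S` is a (non-randomized) stopping time w.r.t. the process `X` (time starts at 1):
its value is determined by the observations up to itself. -/
def IsSTW (X : ℕ → Ω → 𝒳) (S : Ω → ℕ) : Prop :=
  ∀ ω ω', (∀ i, 1 ≤ i → i ≤ S ω → X i ω = X i ω') → S ω' = S ω

/-- The path of the process `Y` at sample `ω`. -/
def pathOf (Y : ℕ → Ω → 𝒴) (ω : Ω) : ℕ → 𝒴 := fun i => Y i ω

/-- The path `f` extends (passes through) the node `y` (a finite string). -/
def ExtN (y : List 𝒴) (f : ℕ → 𝒴) : Prop := ∀ i : Fin y.length, f (i.1 + 1) = y.get i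

/-- A stopping function on paths: its value depends only on the path up to that value.
This is the path-representation of a non-randomized stopping time (a tree). -/
def IsStopFun (t : (ℕ → 𝒴) → ℕ) : Prop :=
  ∀ f g, (∀ i, 1 ≤ i → i ≤ t f → f i = g i) → t g = t f

/-- `y` is an internal node of the tree `t`. -/
def InternalNode (t : (ℕ → 𝒴) → ℕ) (y : List 𝒴) : Prop :=
  ∀ f, ExtN y f → y.length < t f

/-- `u` is (the stopping function of) a subtree rooted at node `y`. -/
def IsSubtreeAt (y : List 𝒴) (u : (ℕ → 𝒴) → ℕ) : Prop :=
  IsStopFun u ∧ ∀ f, ExtN y f → y.length ≤ u f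

/-- false-alarm weight `a(y)` of node `y` -/
def aW (p : Ω → ℝ) (Y : ℕ → Ω → 𝒴) (S : Ω → ℕ) (y : List 𝒴) : ℝ :=
  prW p (fun ω => ExtN y (pathOf Y ω) ∧ y.length < S ω)

/-- delay weight `b(y)` of node `y` -/
def bW (p : Ω → ℝ) (Y : ℕ → Ω → 𝒴) (S : Ω → ℕ) (y : List 𝒴) : ℝ :=
  exW p (fun ω => if ExtN y (pathOf Y ω) then posP ((y.length : ℝ) - (S ω : ℝ)) else 0)

/-- false-alarm weight `a(T_y)` of a subtree `u` rooted at `y` (the sum of `a(γ)`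
over its leaves `γ`). -/
def aSubW (p : Ω → ℝ) (Y : ℕ → Ω → 𝒴) (S : Ω → ℕ) (y : List 𝒴) (u : (ℕ → 𝒴) → ℕ) : ℝ :=
  prW p (fun ω => ExtN y (pathOf Y ω) ∧ u (pathOf Y ω) < S ω)

/-- delay weight `b(T_y)` of a subtree `u` rooted at `y` (the sum of `b(γ)` over its leaves). -/
def bSubW (p : Ω → ℝ) (Y : ℕ → Ω → 𝒴) (S : Ω → ℕ) (y : List 𝒴) (u : (ℕ → 𝒴) → ℕ) : ℝ :=
  exW p (fun ω => if ExtN y (pathOf Y ω) then posP ((u (pathOf Y ω) : ℝ) - (S ω : ℝ)) else 0)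

/-- Lagrangian cost `J_λ(T_y)` of the subtree `u` rooted at `y`. -/
def JsubW (p : Ω → ℝ) (Y : ℕ → Ω → 𝒴) (S : Ω → ℕ) (lam : ℝ) (y : List 𝒴)
    (u : (ℕ → 𝒴) → ℕ) : ℝ :=
  bSubW p Y S y u + lam * aSubW p Y S y u

/-- Lagrangian cost `J_λ(y)` of the single node `y`. -/
def JnodeW (p : Ω → ℝ) (Y : ℕ → Ω → 𝒴) (S : Ω → ℕ) (lam : ℝ) (y : List 𝒴) : ℝ :=
  bW p Y S y + lam * aW p Y S y

/-- `u` is the smallest minimal-cost rooted subtree `T_y(λ)` of `t` at node `y`,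
for Lagrange multiplier `lam`. -/
def IsOptSubtreeAt (p : Ω → ℝ) (Y : ℕ → Ω → 𝒴) (S : Ω → ℕ) (lam : ℝ)
    (t : (ℕ → 𝒴) → ℕ) (y : List 𝒴) (u : (ℕ → 𝒴) → ℕ) : Prop :=
  IsSubtreeAt y u ∧ (∀ f, ExtN y f → u f ≤ t f) ∧
  (∀ v, IsSubtreeAt y v → (∀ f, ExtN y f → v f ≤ t f) →
    JsubW p Y S lam y u ≤ JsubW p Y S lam y v) ∧
  (∀ v, IsSubtreeAt y v → (∀ f, ExtN y f → v f ≤ t f) →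
    JsubW p Y S lam y v = JsubW p Y S lam y u → ∀ f, ExtN y f → u f ≤ v f)

/-- the tradeoff quantity `g(y, T) = (b(T_y) - b(y)) / (a(y) - a(T_y))`
(with the convention 0/0 = 0, which holds automatically for real division). -/
def gW (p : Ω → ℝ) (Y : ℕ → Ω → 𝒴) (S : Ω → ℕ) (t : (ℕ → 𝒴) → ℕ) (y : List 𝒴) : ℝ :=
  (bSubW p Y S y t - bW p Y S y) / (aW p Y S y - aSubW p Y S y t)

/-- node permuted by a coordinate permutation -/
def permNode (y : List 𝒴) (π : Equiv.Perm (Fin y.length)) : List 𝒴 :=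
  List.ofFn fun i => y.get (π i)

/-- permutation invariance of a stopping time w.r.t. process `Y`:
`P(T ≤ n | Y^n = y^n) = P(T ≤ n | Y^n = π(y^n))`. -/
def PermInvST (p : Ω → ℝ) (Y : ℕ → Ω → 𝒴) (T : Ω → ℕ) (κ : ℕ) : Prop :=
  ∀ y : List 𝒴, y.length ≤ κ → ∀ π : Equiv.Perm (Fin y.length),
    cprW p (fun ω => T ω ≤ y.length) (fun ω => ExtN y (pathOf Y ω)) =
    cprW p (fun ω => T ω ≤ y.length) (fun ω => ExtN (permNode y π) (pathOf Y ω))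

/-- the pairs `(X_i, Y_i)` are i.i.d. (over the first `κ` time steps). -/
def IIDPairs [Fintype 𝒳] [Fintype 𝒴] (p : Ω → ℝ) (X : ℕ → Ω → 𝒳) (Y : ℕ → Ω → 𝒴)
    (κ : ℕ) : Prop :=
  ∃ μ : 𝒳 × 𝒴 → ℝ, (∀ z, 0 ≤ μ z) ∧ (∑ z, μ z = 1) ∧
    ∀ (x : ℕ → 𝒳) (yf : ℕ → 𝒴),
      prW p (fun ω => ∀ i, 1 ≤ i → i ≤ κ → X i ω = x i ∧ Y i ω = yf i) =
        ∏ i ∈ Finset.Icc 1 κ, μ (x i, yf i)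

/-- a randomized stopping time bounded by `κ`, given by its conditional stopping
kernel `q n y^n = P(T = n | Y^n = y^n)`. -/
def IsRandST (q : ℕ → (ℕ → 𝒴) → ℝ) (κ : ℕ) : Prop :=
  (∀ n f, 0 ≤ q n f) ∧
  (∀ n f g, (∀ i, 1 ≤ i → i ≤ n → f i = g i) → q n g = q n f) ∧
  (∀ f, ∑ n ∈ Finset.Icc 1 κ, q n f = 1)

/-- false-alarm probability `P(T < S)` of a randomized stopping time -/
def faR (p : Ω → ℝ) (Y : ℕ → Ω → 𝒴) (S : Ω → ℕ) (κ : ℕ) (q : ℕ → (ℕ → 𝒴) → ℝ) : ℝ :=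
  exW p (fun ω => ∑ n ∈ Finset.Icc 1 κ, q n (pathOf Y ω) * (if n < S ω then 1 else 0))

/-- expected reaction delay `E(T - S)⁺` of a randomized stopping time -/
def delayR (p : Ω → ℝ) (Y : ℕ → Ω → 𝒴) (S : Ω → ℕ) (κ : ℕ) (q : ℕ → (ℕ → 𝒴) → ℝ) : ℝ :=
  exW p (fun ω => ∑ n ∈ Finset.Icc 1 κ, q n (pathOf Y ω) * posP ((n : ℝ) - (S ω : ℝ)))

/-- the optimal tradeoff curve `d(α)` -/
def dW (p : Ω → ℝ) (Y : ℕ → Ω → 𝒴) (S : Ω → ℕ) (κ : ℕ) (α : ℝ) : ℝ :=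
  sInf {v | ∃ q, IsRandST q κ ∧ faR p Y S κ q ≤ α ∧ v = delayR p Y S κ q}

/-- the stopping kernel of a non-randomized stopping function -/
def detKer (t : (ℕ → 𝒴) → ℕ) : ℕ → (ℕ → 𝒴) → ℝ := fun n f => if t f = n then 1 else 0

/-- prefix of length `n` of a path (the node of depth `n` it visits) -/
def prefixOf (f : ℕ → 𝒴) (n : ℕ) : List 𝒴 := (List.range n).map fun i => f (i + 1)

/-- the one-step-lookahead node cost `c(y^n)` -/
def cnodeW (p : Ω → ℝ) (Y : ℕ → Ω → 𝒴) (S : Ω → ℕ) (lam : ℝ) (y : List 𝒴) : ℝ :=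
  cexW p (fun ω => posP ((y.length : ℝ) - (S ω : ℝ))) (fun ω => ExtN y (pathOf Y ω)) +
    lam * cprW p (fun ω => y.length < S ω) (fun ω => ExtN y (pathOf Y ω))

end

/-!
A randomized stopping time `q` is the mixture, over `u` uniform on `(0, 1]`, of the
non-randomized stopping times `quantileStop q u` that stop as soon as the cumulative stopping
probability reaches `u`. Along the finitely many paths of `Y` only finitely many of them differ,
so the achievable points `(P(T < S), E(T - S)⁺)` form the convex hull of the finitely many points
of non-randomized stopping times, and `d(α)` is the least height of this polygon over `(-∞, α]`.
Such a lower profile of a polygon is convex, and by the equality case of Jensen's inequality its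
minimizers are mixtures of vertices lying on its graph. Stopping at time `κ` (no false alarm)
and at time `1` (no delay) make every `α ∈ [0, 1]` feasible and the profile vanish to the right
of some vertex.
-/

namespace ChangeDetection

section LowerProfile

noncomputable def lowerProfile (K : Set (ℝ × ℝ)) (α : ℝ) : ℝ := sInf (Prod.snd '' {y ∈ K | y.1 ≤ α})

variable {K : Set (ℝ × ℝ)}

lemma lowerProfile_le (hK : IsCompact K) {y : ℝ × ℝ} (hy : y ∈ K) {α : ℝ} (hyα : y.1 ≤ α) :
    lowerProfile K α ≤ y.2 :=
  csInf_le ((hK.bddBelow_image continuous_snd.continuousOn).mono (Set.image_mono fun _ h => h.1))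
    ⟨y, ⟨hy, hyα⟩, rfl⟩

lemma exists_lowerProfile_eq (hK : IsCompact K) {α : ℝ}
    (hα : α ∈ upperClosure (Prod.fst '' K)) : ∃ x ∈ K, x.1 ≤ α ∧ lowerProfile K α = x.2 := by
  obtain ⟨_, ⟨y, hy, rfl⟩, hyα⟩ := mem_upperClosure.1 hα
  obtain ⟨x, ⟨hxK, hxα⟩, hmin⟩ :=
    (hK.inter_right (isClosed_le continuous_fst continuous_const)).exists_isMinOn ⟨y, hy, hyα⟩
      continuous_snd.continuousOn
  refine ⟨x, hxK, hxα, IsLeast.csInf_eq ⟨⟨x, ⟨hxK, hxα⟩, rfl⟩, ?_⟩⟩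
  rintro _ ⟨z, hz, rfl⟩
  exact hmin hz

lemma lowerProfile_anti (hK : IsCompact K) {α β : ℝ} (hα : α ∈ upperClosure (Prod.fst '' K))
    (hαβ : α ≤ β) : lowerProfile K β ≤ lowerProfile K α := by
  obtain ⟨x, hxK, hxα, hx⟩ := exists_lowerProfile_eq hK hα
  exact hx ▸ lowerProfile_le hK hxK (hxα.trans hαβ)

lemma lowerProfile_nonneg (hK : IsCompact K) (hK0 : ∀ y ∈ K, 0 ≤ y.2) {α : ℝ}
    (hα : α ∈ upperClosure (Prod.fst '' K)) : 0 ≤ lowerProfile K α := by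
  obtain ⟨x, hxK, -, hx⟩ := exists_lowerProfile_eq hK hα
  exact hx ▸ hK0 x hxK

lemma convexOn_lowerProfile (hK : IsCompact K) (hKc : Convex ℝ K) :
    ConvexOn ℝ (upperClosure (Prod.fst '' K)) (lowerProfile K) := by
  refine ⟨(upperClosure _).upper.ordConnected.convex, fun α hα β hβ a b ha hb hab => ?_⟩
  obtain ⟨x, hxK, hxα, hx⟩ := exists_lowerProfile_eq hK hα
  obtain ⟨y, hyK, hyβ, hy⟩ := exists_lowerProfile_eq hK hβ
  rw [hx, hy]
  have hxy : (a • x + b • y).1 ≤ a • α + b • β := by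
    simp only [Prod.fst_add, Prod.smul_fst, smul_eq_mul]
    gcongr
  simpa using lowerProfile_le hK (hKc hxK hyK ha hb hab) hxy

lemma le_snd_of_mem_convexHull {s : Set ℝ} {f : ℝ → ℝ} (hf : ConvexOn ℝ s f)
    {F : Set (ℝ × ℝ)} (hF : ∀ z ∈ F, z.1 ∈ s ∧ f z.1 ≤ z.2) {y : ℝ × ℝ}
    (hy : y ∈ convexHull ℝ F) : f y.1 ≤ y.2 :=
  (convexHull_min hF hf.convex_epigraph hy).2

/-- Equality case of Jensen's inequality. -/
lemma mem_convexHull_filter_of_le {s : Set ℝ} {f : ℝ → ℝ} (hf : ConvexOn ℝ s f)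
    {D : Finset (ℝ × ℝ)} (hDs : ∀ z ∈ D, z.1 ∈ s) (hDf : ∀ z ∈ D, f z.1 ≤ z.2) {x : ℝ × ℝ}
    (hx : x ∈ convexHull ℝ ↑D) (hxf : x.2 ≤ f x.1) :
    x ∈ convexHull ℝ ↑{z ∈ D | f z.1 = z.2} := by
  obtain ⟨w, hw0, hw1, rfl⟩ := Finset.mem_convexHull'.1 hx
  have hjensen := hf.map_sum_le hw0 hw1 (p := Prod.fst) hDs
  simp only [Prod.fst_sum, Prod.snd_sum, Prod.smul_fst, Prod.smul_snd, smul_eq_mul] at hjensen hxf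
  have hterm : ∀ z ∈ D, 0 ≤ w z * (z.2 - f z.1) := fun z hz =>
    mul_nonneg (hw0 z hz) (sub_nonneg.2 (hDf z hz))
  have hgap : ∑ z ∈ D, w z * (z.2 - f z.1) = 0 := by
    refine le_antisymm ?_ (sum_nonneg hterm)
    simp only [mul_sub, sum_sub_distrib]
    linarith
  have hon : ∀ z ∈ D, w z ≠ 0 → f z.1 = z.2 := fun z hz hwz => (sub_eq_zero.1
    ((mul_eq_zero.1 ((sum_eq_zero_iff_of_nonneg hterm).1 hgap z hz)).resolve_left hwz)).symm
  rw [← sum_filter_of_ne fun z hz hwz => hon z hz (left_ne_zero_of_smul hwz)]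
  refine (convex_convexHull ℝ _).sum_mem (fun z hz => hw0 z (mem_filter.1 hz).1) ?_
    fun z hz => subset_convexHull ℝ _ hz
  rwa [sum_filter_of_ne fun z hz hwz => hon z hz hwz]

lemma exists_mem_segment_fst_eq {x z : ℝ × ℝ} {α : ℝ} (hx : x.1 ≤ α) (hz : α ≤ z.1) :
    ∃ y ∈ segment ℝ x z, y.1 = α := by
  have : α ∈ (LinearMap.fst ℝ ℝ ℝ).toAffineMap '' segment ℝ x z := by
    rw [image_segment]
    exact (segment_eq_Icc (hx.trans hz)).symm ▸ ⟨hx, hz⟩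
  obtain ⟨y, hy, rfl⟩ := this
  exact ⟨y, hy, rfl⟩

lemma mem_upperClosure_fst_of_mem {K : Set (ℝ × ℝ)} {y : ℝ × ℝ} (hy : y ∈ K) :
    y.1 ∈ upperClosure (Prod.fst '' K) :=
  mem_upperClosure.2 ⟨y.1, ⟨y, hy, rfl⟩, le_rfl⟩

section Polygon

variable {D : Finset (ℝ × ℝ)}

/-- A minimizer for `α` lies left of `α` and is a mixture of vertices on the graph; the segment
from it to the vertex `z` crosses the vertical line at `α` below the graph, since the profile
is antitone. -/
lemma exists_mem_convexHull_filter_fst_eq {α : ℝ}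
    (hα : α ∈ upperClosure (Prod.fst '' convexHull ℝ (D : Set (ℝ × ℝ)))) {z : ℝ × ℝ} (hzD : z ∈ D)
    (hz : lowerProfile (convexHull ℝ ↑D) z.1 = z.2) (hαz : α ≤ z.1) :
    ∃ y ∈ convexHull ℝ (↑{z ∈ D | lowerProfile (convexHull ℝ ↑D) z.1 = z.2} : Set (ℝ × ℝ)),
      y.1 = α ∧ y.2 ≤ lowerProfile (convexHull ℝ ↑D) α := by
  set K := convexHull ℝ (D : Set (ℝ × ℝ))
  have hK : IsCompact K := D.finite_toSet.isCompact_convexHull ℝ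
  obtain ⟨x, hxK, hxα, hfx⟩ := exists_lowerProfile_eq hK hα
  have hxF := mem_convexHull_filter_of_le (convexOn_lowerProfile hK (convex_convexHull ℝ _))
    (fun z hz => mem_upperClosure_fst_of_mem (subset_convexHull ℝ _ hz))
    (fun z hz => lowerProfile_le hK (subset_convexHull ℝ _ hz) le_rfl) hxK
    (hfx ▸ lowerProfile_anti hK (mem_upperClosure_fst_of_mem hxK) hxα)
  obtain ⟨y, hy, rfl⟩ := exists_mem_segment_fst_eq hxα hαz
  have hzf : z.2 ≤ lowerProfile K y.1 := hz ▸ lowerProfile_anti hK hα hαz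
  refine ⟨y, (convex_convexHull ℝ _).segment_subset hxF
    (subset_convexHull ℝ _ (mem_filter.2 ⟨hzD, hz⟩)) hy, rfl, ?_⟩
  exact ((convex_Iic _).linear_preimage (LinearMap.snd ℝ ℝ ℝ)).segment_subset hfx.ge hzf hy

theorem lowerProfile_eq_sInf_convexHull_filter (hD : ∀ z ∈ D, 0 ≤ z.2)
    {z₀ : ℝ × ℝ} (hz₀ : z₀ ∈ D) (hz₀' : z₀.2 = 0) {α : ℝ}
    (hα : α ∈ upperClosure (Prod.fst '' convexHull ℝ (D : Set (ℝ × ℝ)))) :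
    lowerProfile (convexHull ℝ ↑D) α =
      sInf {c | (α, c) ∈ convexHull ℝ ↑{z ∈ D | lowerProfile (convexHull ℝ ↑D) z.1 = z.2}} := by
  set K := convexHull ℝ (D : Set (ℝ × ℝ))
  set f := lowerProfile K
  set F := {z ∈ D | f z.1 = z.2}
  have hK : IsCompact K := D.finite_toSet.isCompact_convexHull ℝ
  have hlower : ∀ c, (α, c) ∈ convexHull ℝ (F : Set (ℝ × ℝ)) → f α ≤ c := fun c hc =>
    le_snd_of_mem_convexHull (convexOn_lowerProfile hK (convex_convexHull ℝ _)) (fun z hz =>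
      ⟨mem_upperClosure_fst_of_mem (subset_convexHull ℝ _ (mem_filter.1 hz).1),
        (mem_filter.1 hz).2.le⟩) hc
  by_cases hright : ∃ z ∈ F, α ≤ z.1
  · obtain ⟨z, hzF, hαz⟩ := hright
    obtain ⟨y, hyF, rfl, hyf⟩ :=
      exists_mem_convexHull_filter_fst_eq hα (mem_filter.1 hzF).1 (mem_filter.1 hzF).2 hαz
    exact le_antisymm (le_csInf ⟨y.2, hyF⟩ hlower) ((csInf_le ⟨f y.1, hlower⟩ hyF).trans hyf)
  · push Not at hright
    have hempty : {c | (α, c) ∈ convexHull ℝ (F : Set (ℝ × ℝ))} = ∅ :=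
      Set.eq_empty_of_forall_notMem fun c hc => lt_irrefl α <|
        convexHull_min hright ((convex_Iio α).linear_preimage (LinearMap.fst ℝ ℝ ℝ)) hc
    have hK0 : ∀ y ∈ K, 0 ≤ y.2 :=
      convexHull_min hD ((convex_Ici 0).linear_preimage (LinearMap.snd ℝ ℝ ℝ))
    have hz₀K : z₀ ∈ K := subset_convexHull ℝ _ hz₀
    have hfz₀ : f z₀.1 = z₀.2 := le_antisymm (lowerProfile_le hK hz₀K le_rfl)
      (hz₀' ▸ lowerProfile_nonneg hK hK0 (mem_upperClosure_fst_of_mem hz₀K))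
    rw [hempty, Real.sInf_empty]
    refine le_antisymm ?_ (lowerProfile_nonneg hK hK0 hα)
    calc f α ≤ f z₀.1 := lowerProfile_anti hK (mem_upperClosure_fst_of_mem hz₀K)
          (hright z₀ (mem_filter.2 ⟨hz₀, hfz₀⟩)).le
      _ = 0 := hfz₀.trans hz₀'

end Polygon

end LowerProfile

section Telescoping

noncomputable def gapBelow (C : Finset ℝ) (u : ℝ) : ℝ := u - sSup {c ∈ (C : Set ℝ) | c < u}

lemma gapBelow_nonneg {C : Finset ℝ} {u : ℝ} (h : ∃ c ∈ C, c < u) : 0 ≤ gapBelow C u := by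
  obtain ⟨c, hc, hcu⟩ := h
  have hfin : {c ∈ (C : Set ℝ) | c < u}.Finite := C.finite_toSet.subset fun _ h => h.1
  have hmem : sSup {c ∈ (C : Set ℝ) | c < u} ∈ {c ∈ (C : Set ℝ) | c < u} :=
    Set.Nonempty.csSup_mem ⟨c, hc, hcu⟩ hfin
  exact sub_nonneg.2 hmem.2.le

lemma sum_gapBelow_Ioc {C : Finset ℝ} {a b : ℝ} (ha : a ∈ C) (hb : b ∈ C) (hab : a ≤ b) :
    ∑ u ∈ C with u ∈ Set.Ioc a b, gapBelow C u = b - a := by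
  induction h : #{u ∈ C | u ∈ Set.Ioc a b} using Nat.strong_induction_on generalizing b with
  | _ n ih =>
  rcases hab.eq_or_lt with rfl | hlt
  · simp
  set P := {c ∈ (C : Set ℝ) | c < b}
  have hPfin : P.Finite := C.finite_toSet.subset fun _ h => h.1
  obtain ⟨hb'C, hb'b⟩ : sSup P ∈ P := Set.Nonempty.csSup_mem ⟨a, ha, hlt⟩ hPfin
  have hab' : a ≤ sSup P := le_csSup hPfin.bddAbove ⟨ha, hlt⟩
  have hsplit : {u ∈ C | u ∈ Set.Ioc a b} = insert b {u ∈ C | u ∈ Set.Ioc a (sSup P)} := by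
    ext u
    simp only [mem_filter, mem_insert, Set.mem_Ioc]
    constructor
    · rintro ⟨huC, hau, hub⟩
      rcases hub.eq_or_lt with rfl | hub
      · exact Or.inl rfl
      · exact Or.inr ⟨huC, hau, le_csSup hPfin.bddAbove ⟨huC, hub⟩⟩
    · rintro (rfl | ⟨huC, hau, hub⟩)
      · exact ⟨hb, hlt, le_rfl⟩
      · exact ⟨huC, hau, hub.trans hb'b.le⟩
  have hbnot : b ∉ {u ∈ C | u ∈ Set.Ioc a (sSup P)} := fun hb' =>
    (mem_filter.1 hb').2.2.not_gt hb'b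
  have hcard : #{u ∈ C | u ∈ Set.Ioc a (sSup P)} < n := by
    rw [← h, hsplit, card_insert_of_notMem hbnot]
    exact Nat.lt_succ_self _
  rw [hsplit, sum_insert hbnot, ih _ hcard hb'C hab' rfl, gapBelow]
  ring

end Telescoping

section Quantile

variable {𝒴 : Type*} {q : ℕ → (ℕ → 𝒴) → ℝ} {κ : ℕ}

def stopCdf (q : ℕ → (ℕ → 𝒴) → ℝ) (f : ℕ → 𝒴) (n : ℕ) : ℝ := ∑ k ∈ Icc 1 n, q k f

noncomputable def quantileStop (q : ℕ → (ℕ → 𝒴) → ℝ) (u : ℝ) (f : ℕ → 𝒴) : ℕ :=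
  sInf {n | u ≤ stopCdf q f n}

lemma stopCdf_zero (f : ℕ → 𝒴) : stopCdf q f 0 = 0 := by
  simp [stopCdf]

lemma stopCdf_succ (f : ℕ → 𝒴) (n : ℕ) : stopCdf q f (n + 1) = stopCdf q f n + q (n + 1) f :=
  sum_Icc_succ_top (by omega) _

lemma stopCdf_eq_one (hq : IsRandST q κ) (f : ℕ → 𝒴) : stopCdf q f κ = 1 := hq.2.2 f

lemma monotone_stopCdf (hq : IsRandST q κ) (f : ℕ → 𝒴) : Monotone (stopCdf q f) :=
  monotone_nat_of_le_succ fun n => by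
    rw [stopCdf_succ]
    linarith [hq.1 (n + 1) f]

lemma stopCdf_congr (hq : IsRandST q κ) {f g : ℕ → 𝒴} {n : ℕ}
    (hfg : ∀ i, 1 ≤ i → i ≤ n → f i = g i) : stopCdf q g n = stopCdf q f n :=
  sum_congr rfl fun k hk => hq.2.1 k f g fun i hi hik => hfg i hi (hik.trans (mem_Icc.1 hk).2)

lemma quantileStop_eq_succ_iff (hq : IsRandST q κ) {u : ℝ} {f : ℕ → 𝒴} {n : ℕ} :
    quantileStop q u f = n + 1 ↔ u ∈ Set.Ioc (stopCdf q f n) (stopCdf q f (n + 1)) := by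
  rw [quantileStop, Nat.sInf_upward_closed_eq_succ_iff
    (fun _ _ hk h => h.trans (monotone_stopCdf hq f hk))]
  simp only [Set.mem_ofPred_eq, Set.mem_Ioc, not_le, and_comm]

lemma quantileStop_mem_Icc (hq : IsRandST q κ) {u : ℝ} (hu : u ∈ Set.Ioc 0 1) (f : ℕ → 𝒴) :
    1 ≤ quantileStop q u f ∧ quantileStop q u f ≤ κ := by
  have hκ : κ ∈ {n | u ≤ stopCdf q f n} := by
    simpa [stopCdf_eq_one hq f] using hu.2
  refine ⟨Nat.one_le_iff_ne_zero.2 fun h0 => ?_, Nat.sInf_le hκ⟩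
  rcases Nat.sInf_eq_zero.1 h0 with h | h
  · exact (lt_of_lt_of_le hu.1 (stopCdf_zero (q := q) f ▸ h)).false
  · exact Set.eq_empty_iff_forall_notMem.1 h κ hκ

lemma isStopFun_quantileStop (hq : IsRandST q κ) {u : ℝ} (hu : u ∈ Set.Ioc 0 1) :
    IsStopFun (quantileStop q u) := by
  intro f g hfg
  obtain ⟨n, hn⟩ := Nat.exists_eq_add_of_le' (quantileStop_mem_Icc hq hu f).1
  rw [hn] at hfg ⊢
  rw [quantileStop_eq_succ_iff hq] at hn ⊢
  rwa [stopCdf_congr hq fun i hi hin => hfg i hi (by omega), stopCdf_congr hq hfg]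

lemma sum_gapBelow_mul_detKer_quantileStop (hq : IsRandST q κ) {C : Finset ℝ} {f : ℕ → 𝒴}
    (hfC : ∀ n ≤ κ, stopCdf q f n ∈ C) {n : ℕ} (hn : n ∈ Icc 1 κ) :
    ∑ u ∈ C with u ∈ Set.Ioc 0 1, gapBelow C u * detKer (quantileStop q u) n f = q n f := by
  obtain ⟨m, rfl⟩ := Nat.exists_eq_add_of_le' (mem_Icc.1 hn).1
  have hm : m + 1 ≤ κ := (mem_Icc.1 hn).2
  have hcdf0 : 0 ≤ stopCdf q f m := stopCdf_zero (q := q) f ▸ monotone_stopCdf hq f m.zero_le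
  have hcdf1 : stopCdf q f (m + 1) ≤ 1 := stopCdf_eq_one hq f ▸ monotone_stopCdf hq f hm
  have hIoc : ∀ u, u ∈ Set.Ioc (stopCdf q f m) (stopCdf q f (m + 1)) → u ∈ Set.Ioc 0 1 :=
    fun u hu => ⟨hcdf0.trans_lt hu.1, hu.2.trans hcdf1⟩
  simp only [detKer, quantileStop_eq_succ_iff hq, mul_ite, mul_one, mul_zero]
  rw [← sum_filter, filter_filter, filter_congr fun u _ => and_iff_right_of_imp (hIoc u),
    sum_gapBelow_Ioc (hfC m (by omega)) (hfC (m + 1) hm) (monotone_stopCdf hq f m.le_succ),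
    stopCdf_succ]
  ring

end Quantile

section Tradeoff

variable {Ω 𝒴 : Type*} [Fintype Ω] (p : Ω → ℝ) (Y : ℕ → Ω → 𝒴) (S : Ω → ℕ) (κ : ℕ)

noncomputable def tradeoff : (ℕ → (ℕ → 𝒴) → ℝ) →ₗ[ℝ] ℝ × ℝ where
  toFun q := (faR p Y S κ q, delayR p Y S κ q)
  map_add' q₁ q₂ := by
    simp only [faR, delayR, exW, Pi.add_apply, add_mul, sum_add_distrib, mul_add, Prod.mk_add_mk]
  map_smul' c q := by
    simp only [faR, delayR, exW, Pi.smul_apply, smul_eq_mul, RingHom.id_apply, Prod.smul_mk,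
      mul_sum, mul_assoc, mul_left_comm c]

variable {p Y S κ}

lemma tradeoff_apply (q : ℕ → (ℕ → 𝒴) → ℝ) :
    tradeoff p Y S κ q = (faR p Y S κ q, delayR p Y S κ q) := rfl

lemma tradeoff_congr {q q' : ℕ → (ℕ → 𝒴) → ℝ}
    (h : ∀ ω, ∀ n ∈ Icc 1 κ, q n (pathOf Y ω) = q' n (pathOf Y ω)) :
    tradeoff p Y S κ q = tradeoff p Y S κ q' := by
  simp only [tradeoff_apply, faR, delayR, exW]
  congr 1 <;> exact sum_congr rfl fun ω _ => by rw [sum_congr rfl fun n hn => by rw [h ω n hn]]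

lemma sum_detKer_mul {t : (ℕ → 𝒴) → ℕ} {f : ℕ → 𝒴} (hb : 1 ≤ t f ∧ t f ≤ κ) (g : ℕ → ℝ) :
    ∑ n ∈ Icc 1 κ, detKer t n f * g n = g (t f) := by
  simp only [detKer, ite_mul, one_mul, zero_mul]
  rw [sum_ite_eq, if_pos (mem_Icc.2 hb)]

lemma tradeoff_detKer {t : (ℕ → 𝒴) → ℕ} (hb : ∀ f, 1 ≤ t f ∧ t f ≤ κ) :
    tradeoff p Y S κ (detKer t) =
      (∑ ω, p ω * if t (pathOf Y ω) < S ω then 1 else 0,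
        ∑ ω, p ω * posP (t (pathOf Y ω) - S ω)) := by
  simp only [tradeoff_apply, faR, delayR, exW, sum_detKer_mul (hb _)]

lemma isRandST_detKer {t : (ℕ → 𝒴) → ℕ} (ht : IsStopFun t) (hb : ∀ f, 1 ≤ t f ∧ t f ≤ κ) :
    IsRandST (detKer t) κ := by
  refine ⟨fun n f => by unfold detKer; positivity, fun n f g hfg => ?_, fun f => ?_⟩
  · have hiff : t g = n ↔ t f = n := by
      constructor
      · intro hg
        rw [← hg, ht g f fun i hi hin => (hfg i hi (hg ▸ hin)).symm]
      · intro hf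
        rw [← hf, ht f g fun i hi hin => hfg i hi (hf ▸ hin)]
    simp only [detKer, hiff]
  · simpa using sum_detKer_mul (hb f) fun _ => 1

lemma convex_setOf_isRandST : Convex ℝ {q : ℕ → (ℕ → 𝒴) → ℝ | IsRandST q κ} := by
  intro q₁ h₁ q₂ h₂ a b ha hb hab
  refine ⟨fun n f => ?_, fun n f g hfg => ?_, fun f => ?_⟩
  · simp only [Pi.add_apply, Pi.smul_apply, smul_eq_mul]
    exact add_nonneg (mul_nonneg ha (h₁.1 n f)) (mul_nonneg hb (h₂.1 n f))
  · simp only [Pi.add_apply, Pi.smul_apply, smul_eq_mul, h₁.2.1 n f g hfg, h₂.2.1 n f g hfg]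
  · simp only [Pi.add_apply, Pi.smul_apply, smul_eq_mul, sum_add_distrib, ← mul_sum, h₁.2.2 f,
      h₂.2.2 f, mul_one, hab]

variable (p Y S κ)

def detPoints : Set (ℝ × ℝ) :=
  {z | ∃ t, IsStopFun t ∧ (∀ f, 1 ≤ t f ∧ t f ≤ κ) ∧ tradeoff p Y S κ (detKer t) = z}

def randPoints : Set (ℝ × ℝ) := tradeoff p Y S κ '' {q | IsRandST q κ}

lemma detPoints_finite : (detPoints p Y S κ).Finite := by
  refine (Set.finite_range fun σ : Ω → Fin (κ + 1) =>
    ((∑ ω, p ω * if (σ ω : ℕ) < S ω then 1 else 0 : ℝ),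
      ∑ ω, p ω * posP ((σ ω : ℕ) - S ω))).subset ?_
  rintro _ ⟨t, -, hb, rfl⟩
  exact ⟨fun ω => ⟨t (pathOf Y ω), Nat.lt_succ_of_le (hb _).2⟩, (tradeoff_detKer hb).symm⟩

variable {p Y S κ}

/-- The weight `gapBelow C u` is the length of the interval of thresholds on which
`quantileStop q` agrees with `quantileStop q u` along every path of `Y`. -/
lemma tradeoff_mem_convexHull_detPoints {q : ℕ → (ℕ → 𝒴) → ℝ} (hq : IsRandST q κ) :
    tradeoff p Y S κ q ∈ convexHull ℝ (detPoints p Y S κ) := by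
  set C : Finset ℝ := insert 0 (insert 1
    ((univ ×ˢ range (κ + 1)).image fun x : Ω × ℕ => stopCdf q (pathOf Y x.1) x.2))
  have h0 : (0 : ℝ) ∈ C := mem_insert_self _ _
  have h1 : (1 : ℝ) ∈ C := mem_insert_of_mem (mem_insert_self _ _)
  have hC : ∀ ω, ∀ n ≤ κ, stopCdf q (pathOf Y ω) n ∈ C := fun ω n hn =>
    mem_insert_of_mem (mem_insert_of_mem (mem_image.2
      ⟨(ω, n), mem_product.2 ⟨mem_univ ω, mem_range.2 (by omega)⟩, rfl⟩))
  have hdecomp : tradeoff p Y S κ q = ∑ u ∈ C with u ∈ Set.Ioc 0 1,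
      gapBelow C u • tradeoff p Y S κ (detKer (quantileStop q u)) := by
    simp_rw [← LinearMap.map_smul, ← map_sum]
    refine tradeoff_congr fun ω n hn => ?_
    simp only [Finset.sum_apply, Pi.smul_apply, smul_eq_mul]
    exact (sum_gapBelow_mul_detKer_quantileStop hq (hC ω) hn).symm
  rw [hdecomp]
  refine (convex_convexHull ℝ _).sum_mem
    (fun u hu => gapBelow_nonneg ⟨0, h0, (mem_filter.1 hu).2.1⟩)
    (by simpa using sum_gapBelow_Ioc h0 h1 zero_le_one) fun u hu => subset_convexHull ℝ _ ?_
  have hu := (mem_filter.1 hu).2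
  exact ⟨_, isStopFun_quantileStop hq hu, quantileStop_mem_Icc hq hu, rfl⟩

lemma randPoints_eq_convexHull : randPoints p Y S κ = convexHull ℝ (detPoints p Y S κ) := by
  refine subset_antisymm ?_ (convexHull_min ?_ (convex_setOf_isRandST.linear_image _))
  · rintro _ ⟨q, hq, rfl⟩
    exact tradeoff_mem_convexHull_detPoints hq
  · rintro _ ⟨t, ht, hb, rfl⟩
    exact ⟨_, isRandST_detKer ht hb, rfl⟩

lemma dW_eq_lowerProfile : dW p Y S κ = lowerProfile (convexHull ℝ (detPoints p Y S κ)) := by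
  ext α
  rw [← randPoints_eq_convexHull, dW, lowerProfile]
  congr 1
  ext v
  simp only [randPoints, tradeoff_apply, Set.mem_image, Set.mem_ofPred_eq]
  constructor
  · rintro ⟨q, hq, hfa, rfl⟩
    exact ⟨_, ⟨⟨q, hq, rfl⟩, hfa⟩, rfl⟩
  · rintro ⟨_, ⟨⟨q, hq, rfl⟩, hfa⟩, rfl⟩
    exact ⟨q, hq, hfa, rfl⟩

lemma isStopFun_const (k : ℕ) : IsStopFun fun _ : ℕ → 𝒴 => k := fun _ _ _ => rfl

lemma exists_mem_detPoints_fst_eq_zero (hκ : 1 ≤ κ) (hS : ∀ ω, S ω ≤ κ) :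
    ∃ z ∈ detPoints p Y S κ, z.1 = 0 := by
  refine ⟨_, ⟨fun _ => κ, isStopFun_const κ, fun _ => ⟨hκ, le_rfl⟩, rfl⟩, ?_⟩
  simp [tradeoff_detKer fun _ => ⟨hκ, le_rfl⟩, (hS _).not_gt]

lemma exists_mem_detPoints_snd_eq_zero (hκ : 1 ≤ κ) (hS : ∀ ω, 1 ≤ S ω) :
    ∃ z ∈ detPoints p Y S κ, z.2 = 0 := by
  refine ⟨_, ⟨fun _ => 1, isStopFun_const 1, fun _ => ⟨le_rfl, hκ⟩, rfl⟩, ?_⟩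
  simp [tradeoff_detKer fun _ => ⟨le_rfl, hκ⟩, posP, hS]

lemma snd_nonneg_of_mem_detPoints (hp : ∀ ω, 0 ≤ p ω) {z : ℝ × ℝ}
    (hz : z ∈ detPoints p Y S κ) : 0 ≤ z.2 := by
  obtain ⟨t, -, hb, rfl⟩ := hz
  rw [tradeoff_detKer hb]
  exact sum_nonneg fun ω _ => mul_nonneg (hp ω) (le_max_right _ _)

end Tradeoff

end ChangeDetection

open ChangeDetection in
theorem d_convex_piecewise_linear_general
    {Ω 𝒴 : Type*} [Fintype Ω]
    (p : Ω → ℝ) (hp : IsProbW p) (Y : ℕ → Ω → 𝒴) (κ : ℕ) (hκ : 1 ≤ κ)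
    (S : Ω → ℕ) (hSb : ∀ ω, 1 ≤ S ω ∧ S ω ≤ κ) :
    ConvexOn ℝ (Set.Icc (0 : ℝ) 1) (dW p Y S κ) ∧
    ∃ F : Finset (ℝ × ℝ),
      (∀ z ∈ F, ∃ t : (ℕ → 𝒴) → ℕ, IsStopFun t ∧ (∀ f, 1 ≤ t f ∧ t f ≤ κ) ∧
        faR p Y S κ (detKer t) = z.1 ∧ delayR p Y S κ (detKer t) = z.2 ∧
        dW p Y S κ z.1 = z.2) ∧
      (∀ α ∈ Set.Icc (0 : ℝ) 1,
        dW p Y S κ α = sInf {c | (α, c) ∈ convexHull ℝ (↑F : Set (ℝ × ℝ))}) := by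
  set D := (detPoints_finite p Y S κ).toFinset
  have hD : (D : Set (ℝ × ℝ)) = detPoints p Y S κ := Set.Finite.coe_toFinset _
  have hmemD : ∀ {z}, z ∈ D ↔ z ∈ detPoints p Y S κ := Set.Finite.mem_toFinset _
  have hd : dW p Y S κ = lowerProfile (convexHull ℝ ↑D) := hD ▸ dW_eq_lowerProfile
  obtain ⟨z₀, hz₀, hz₀1⟩ := exists_mem_detPoints_fst_eq_zero hκ fun ω => (hSb ω).2
  obtain ⟨z₁, hz₁, hz₁2⟩ := exists_mem_detPoints_snd_eq_zero hκ fun ω => (hSb ω).1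
  have hfeas : ∀ α : ℝ, 0 ≤ α → α ∈ upperClosure (Prod.fst '' convexHull ℝ (D : Set (ℝ × ℝ))) :=
    fun α hα => (upperClosure _).upper (hz₀1 ▸ hα)
      (mem_upperClosure_fst_of_mem (subset_convexHull ℝ _ (hmemD.2 hz₀)))
  refine ⟨hd ▸ (convexOn_lowerProfile (D.finite_toSet.isCompact_convexHull ℝ)
      (convex_convexHull ℝ _)).subset (fun α hα => hfeas α hα.1) (convex_Icc 0 1),
    {z ∈ D | dW p Y S κ z.1 = z.2}, fun z hz => ?_, fun α hα => ?_⟩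
  · obtain ⟨hzD, hdz⟩ := mem_filter.1 hz
    obtain ⟨t, ht, hb, rfl⟩ := hmemD.1 hzD
    exact ⟨t, ht, hb, rfl, rfl, hdz⟩
  · rw [hd]
    exact lowerProfile_eq_sInf_convexHull_filter
      (fun z hz => snd_nonneg_of_mem_detPoints hp.1 (hmemD.1 hz)) (hmemD.2 hz₁) hz₁2
      (hfeas α hα.1)

/-- `d(α)` is convex and piecewise linear on `[0,1]`, with break-points
achieved by non-randomized stopping times (its graph is the lower envelope of the
convex hull of finitely many points achieved by non-randomized stopping times). -/
theorem d_convex_piecewise_linear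
    {Ω 𝒳 𝒴 : Type*} [Fintype Ω]
    (p : Ω → ℝ) (hp : IsProbW p) (X : ℕ → Ω → 𝒳) (Y : ℕ → Ω → 𝒴) (κ : ℕ) (hκ : 1 ≤ κ)
    (S : Ω → ℕ) (hS : IsSTW X S) (hSb : ∀ ω, 1 ≤ S ω ∧ S ω ≤ κ) :
    ConvexOn ℝ (Set.Icc (0 : ℝ) 1) (dW p Y S κ) ∧
    ∃ F : Finset (ℝ × ℝ),
      (∀ z ∈ F, ∃ t : (ℕ → 𝒴) → ℕ, IsStopFun t ∧ (∀ f, 1 ≤ t f ∧ t f ≤ κ) ∧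
        faR p Y S κ (detKer t) = z.1 ∧ delayR p Y S κ (detKer t) = z.2 ∧
        dW p Y S κ z.1 = z.2) ∧
      (∀ α ∈ Set.Icc (0 : ℝ) 1,
        dW p Y S κ α = sInf {c | (α, c) ∈ convexHull ℝ (↑F : Set (ℝ × ℝ))}) :=
  d_convex_piecewise_linear_general p hp Y κ hκ S hSb
end

section
/- Strong Lagrange duality holds for the tracking stopping time problem: d(α) = sup_{λ≥0} min_{T≤κ} ( E(T−S)^+ + λ P(T<S) − λα ), where the inner minimization may be restricted to non-randomized stopping times bounded by κ. -/
open Finset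
open scoped Classical

/-!
A randomized stopping time `q` is a mixture of deterministic ones: for `u ∈ (0, 1]` let `t_u`
stop at the first `n` at which the cumulative stopping probability `∑_{k ≤ n} q k` reaches `u`.
Each `t_u` is a stopping time, and for `U` uniform on `(0, 1]` the time `t_U` has law `q`, so every
expected cost that is linear in the kernel is at least the cost of some `t_u`. Applied to the
Lagrangian this gives weak duality.

Conversely the (false alarm, delay) pairs of deterministic stopping times form a finite set `V`,
and every mixture of two of its points that satisfies the false-alarm constraint has delay at
least `d(α)`. For a finite set this forces the multiplier
`λ = max (0, max {(d(α) - b) / (a - α) | (a, b) ∈ V, a > α})` to satisfy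
`d(α) ≤ b + λ (a - α)` on all of `V`, which is strong duality.
-/

open MeasureTheory

section Quantile

variable {𝒴 : Type*} {q : ℕ → (ℕ → 𝒴) → ℝ} {κ n : ℕ} {f : ℕ → 𝒴} {u : ℝ}

def cumKer (q : ℕ → (ℕ → 𝒴) → ℝ) (n : ℕ) (f : ℕ → 𝒴) : ℝ := ∑ k ∈ Icc 1 n, q k f

noncomputable def quantileStop (q : ℕ → (ℕ → 𝒴) → ℝ) (u : ℝ) (f : ℕ → 𝒴) : ℕ :=
  sInf {n | 1 ≤ n ∧ u ≤ cumKer q n f}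

@[simp] lemma cumKer_zero : cumKer q 0 f = 0 := by simp [cumKer]

lemma cumKer_sub_cumKer_pred (hn : 1 ≤ n) : cumKer q n f - cumKer q (n - 1) f = q n f := by
  obtain ⟨m, rfl⟩ := Nat.exists_eq_add_of_le' hn
  simp [cumKer, sum_Icc_succ_top (Nat.le_add_left 1 m)]

namespace IsRandST

variable (hq : IsRandST q κ)
include hq

lemma cumKer_mono (f : ℕ → 𝒴) : Monotone (cumKer q · f) := fun _ _ hab =>
  sum_le_sum_of_subset_of_nonneg (Icc_subset_Icc_right hab) fun k _ _ => hq.1 k f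

lemma cumKer_congr {g : ℕ → 𝒴} (hfg : ∀ i, 1 ≤ i → i ≤ n → f i = g i) :
    cumKer q n g = cumKer q n f :=
  sum_congr rfl fun k hk => hq.2.1 k f g fun i hi hik => hfg i hi (hik.trans (mem_Icc.1 hk).2)

lemma cumKer_self (f : ℕ → 𝒴) : cumKer q κ f = 1 := hq.2.2 f

lemma quantileStop_spec (hu : u ≤ 1) (f : ℕ → 𝒴) :
    1 ≤ quantileStop q u f ∧ quantileStop q u f ≤ κ ∧ u ≤ cumKer q (quantileStop q u f) f := by
  have hκ : 1 ≤ κ := by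
    by_contra h
    have := hq.2.2 f
    simp [Icc_eq_empty_of_lt (not_le.1 h)] at this
  have hmem : κ ∈ {n | 1 ≤ n ∧ u ≤ cumKer q n f} := ⟨hκ, (hq.cumKer_self f).symm ▸ hu⟩
  obtain ⟨h1, h2⟩ := Nat.sInf_mem ⟨κ, hmem⟩
  exact ⟨h1, Nat.sInf_le hmem, h2⟩

lemma isStopFun_quantileStop (hu : u ≤ 1) : IsStopFun (quantileStop q u) := by
  intro f g hfg
  obtain ⟨hf1, -, hfu⟩ := hq.quantileStop_spec hu f
  obtain ⟨hg1, -, hgu⟩ := hq.quantileStop_spec hu g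
  have hg_le : quantileStop q u g ≤ quantileStop q u f :=
    Nat.sInf_le ⟨hf1, hq.cumKer_congr hfg ▸ hfu⟩
  have hf_le : quantileStop q u f ≤ quantileStop q u g :=
    Nat.sInf_le ⟨hg1, (hq.cumKer_congr fun i hi hig => hfg i hi (hig.trans hg_le)).symm ▸ hgu⟩
  exact le_antisymm hg_le hf_le

lemma quantileStop_eq_iff (hu : u ∈ Set.Ioc 0 1) (hn : 1 ≤ n) (f : ℕ → 𝒴) :
    quantileStop q u f = n ↔ u ∈ Set.Ioc (cumKer q (n - 1) f) (cumKer q n f) := by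
  obtain ⟨ht1, -, htu⟩ := hq.quantileStop_spec hu.2 f
  have hle : ∀ m, 1 ≤ m → u ≤ cumKer q m f → quantileStop q u f ≤ m :=
    fun m hm hum => Nat.sInf_le ⟨hm, hum⟩
  constructor
  · rintro rfl
    refine ⟨lt_of_not_ge fun hu' => ?_, htu⟩
    rcases Nat.eq_zero_or_pos (quantileStop q u f - 1) with h0 | hpos
    · simp only [h0, cumKer_zero] at hu'
      exact hu.1.not_ge hu'
    · have := hle _ hpos hu'
      omega
  · rintro ⟨hlt, hun⟩
    refine le_antisymm (hle n hn hun) (not_lt.1 fun hlt' => hlt.not_ge ?_)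
    exact htu.trans (hq.cumKer_mono f (by omega))

lemma detKer_quantileStop_eqOn (hn : 1 ≤ n) (f : ℕ → 𝒴) :
    Set.EqOn (fun u => detKer (quantileStop q u) n f)
      ((Set.Ioc (cumKer q (n - 1) f) (cumKer q n f)).indicator 1) (Set.Ioc 0 1) := by
  intro u hu
  simp only [detKer, Set.indicator_apply, hq.quantileStop_eq_iff hu hn, Pi.one_apply]

lemma integrableOn_detKer_quantileStop (hn : 1 ≤ n) (f : ℕ → 𝒴) :
    IntegrableOn (fun u => detKer (quantileStop q u) n f) (Set.Ioc 0 1) :=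
  ((integrableOn_const (C := (1 : ℝ)) measure_Ioc_lt_top.ne).indicator
    measurableSet_Ioc).congr_fun (hq.detKer_quantileStop_eqOn hn f).symm measurableSet_Ioc

lemma setIntegral_detKer_quantileStop (hn : n ∈ Icc 1 κ) (f : ℕ → 𝒴) :
    ∫ u in Set.Ioc 0 1, detKer (quantileStop q u) n f = q n f := by
  obtain ⟨hn1, hnκ⟩ := mem_Icc.1 hn
  have hmono := hq.cumKer_mono f
  have hsub : Set.Ioc (cumKer q (n - 1) f) (cumKer q n f) ⊆ Set.Ioc 0 1 :=
    Set.Ioc_subset_Ioc (cumKer_zero (q := q) (f := f) ▸ hmono (Nat.zero_le _))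
      (hq.cumKer_self f ▸ hmono hnκ)
  rw [setIntegral_congr_fun measurableSet_Ioc (hq.detKer_quantileStop_eqOn hn1 f),
    setIntegral_indicator measurableSet_Ioc, Set.inter_eq_right.2 hsub, Pi.one_def,
    setIntegral_const, smul_eq_mul, mul_one, Real.volume_real_Ioc_of_le (hmono (Nat.sub_le n 1)),
    cumKer_sub_cumKer_pred hn1]

end IsRandST
end Quantile

section StoppingKernel

variable {𝒴 : Type*} {κ : ℕ} {q₁ q₂ : ℕ → (ℕ → 𝒴) → ℝ} {t : (ℕ → 𝒴) → ℕ} {θ : ℝ}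

lemma IsRandST.mix (h₁ : IsRandST q₁ κ) (h₂ : IsRandST q₂ κ) (hθ : θ ∈ Set.Icc (0 : ℝ) 1) :
    IsRandST (fun n f => θ * q₁ n f + (1 - θ) * q₂ n f) κ := by
  refine ⟨fun n f => ?_, fun n f g hfg => ?_, fun f => ?_⟩
  · exact add_nonneg (mul_nonneg hθ.1 (h₁.1 n f)) (mul_nonneg (sub_nonneg.2 hθ.2) (h₂.1 n f))
  · simp only [h₁.2.1 n f g hfg, h₂.2.1 n f g hfg]
  · rw [sum_add_distrib, ← mul_sum, ← mul_sum, h₁.2.2 f, h₂.2.2 f]; ring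

lemma isRandST_detKer (ht : IsStopFun t) (hb : ∀ f, 1 ≤ t f ∧ t f ≤ κ) :
    IsRandST (detKer t) κ := by
  refine ⟨fun n f => by unfold detKer; split <;> norm_num, fun n f g hfg => ?_, fun f => ?_⟩
  · have key : t f = n ↔ t g = n := by
      constructor
      · rintro rfl; exact ht f g hfg
      · intro h; rw [ht g f fun i hi hig => (hfg i hi (h ▸ hig)).symm, h]
    simp only [detKer, key]
  · simp [detKer, hb f]

end StoppingKernel

section KernelCost

variable {Ω 𝒴 : Type*} [Fintype Ω] {p : Ω → ℝ} {Y : ℕ → Ω → 𝒴} {κ : ℕ} {c : ℕ → Ω → ℝ}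
  {q q₁ q₂ : ℕ → (ℕ → 𝒴) → ℝ} {t : (ℕ → 𝒴) → ℕ} {θ : ℝ}

def kerCost (p : Ω → ℝ) (Y : ℕ → Ω → 𝒴) (κ : ℕ) (c : ℕ → Ω → ℝ) (q : ℕ → (ℕ → 𝒴) → ℝ) : ℝ :=
  exW p fun ω => ∑ n ∈ Icc 1 κ, q n (pathOf Y ω) * c n ω

lemma kerCost_add_mul (c₁ c₂ : ℕ → Ω → ℝ) (lam : ℝ) (q : ℕ → (ℕ → 𝒴) → ℝ) :
    kerCost p Y κ (fun n ω => c₁ n ω + lam * c₂ n ω) q =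
      kerCost p Y κ c₁ q + lam * kerCost p Y κ c₂ q := by
  simp only [kerCost, exW, mul_sum, ← sum_add_distrib]
  exact sum_congr rfl fun _ _ => sum_congr rfl fun _ _ => by ring

lemma kerCost_mix (c : ℕ → Ω → ℝ) :
    kerCost p Y κ c (fun n f => θ * q₁ n f + (1 - θ) * q₂ n f) =
      θ * kerCost p Y κ c q₁ + (1 - θ) * kerCost p Y κ c q₂ := by
  simp only [kerCost, exW, mul_sum, ← sum_add_distrib]
  exact sum_congr rfl fun _ _ => sum_congr rfl fun _ _ => by ring

lemma kerCost_detKer (hb : ∀ f, 1 ≤ t f ∧ t f ≤ κ) (c : ℕ → Ω → ℝ) :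
    kerCost p Y κ c (detKer t) = exW p fun ω => c (t (pathOf Y ω)) ω := by
  simp [kerCost, detKer, hb]

section Integral

variable {Ξ : Type*} [MeasurableSpace Ξ] {μ : Measure Ξ} {r : Ξ → ℕ → (ℕ → 𝒴) → ℝ}

lemma integrable_kerCost (hr : ∀ n ∈ Icc 1 κ, ∀ f, Integrable (fun u => r u n f) μ) :
    Integrable (fun u => kerCost p Y κ c (r u)) μ :=
  integrable_finsetSum _ fun _ _ =>
    (integrable_finsetSum _ fun n hn => (hr n hn _).mul_const _).const_mul _

lemma integral_kerCost (hr : ∀ n ∈ Icc 1 κ, ∀ f, Integrable (fun u => r u n f) μ)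
    (hrq : ∀ n ∈ Icc 1 κ, ∀ f, ∫ u, r u n f ∂μ = q n f) :
    ∫ u, kerCost p Y κ c (r u) ∂μ = kerCost p Y κ c q := by
  simp only [kerCost, exW]
  have hterm : ∀ ω, ∀ n ∈ Icc 1 κ, Integrable (fun u => r u n (pathOf Y ω) * c n ω) μ :=
    fun ω n hn => (hr n hn _).mul_const _
  rw [integral_finsetSum _ fun ω _ => (integrable_finsetSum _ (hterm ω)).const_mul _]
  refine sum_congr rfl fun ω _ => ?_
  rw [integral_const_mul, integral_finsetSum _ (hterm ω)]
  congr 1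
  exact sum_congr rfl fun n hn => by rw [integral_mul_const, hrq n hn]

end Integral

theorem IsRandST.exists_isStopFun_kerCost_le (hq : IsRandST q κ) (p : Ω → ℝ) (Y : ℕ → Ω → 𝒴)
    (c : ℕ → Ω → ℝ) : ∃ t, IsStopFun t ∧ (∀ f, 1 ≤ t f ∧ t f ≤ κ) ∧
      kerCost p Y κ c (detKer t) ≤ kerCost p Y κ c q := by
  have hint : ∀ n ∈ Icc 1 κ, ∀ f,
      IntegrableOn (fun u => detKer (quantileStop q u) n f) (Set.Ioc 0 1) :=
    fun n hn f => hq.integrableOn_detKer_quantileStop (mem_Icc.1 hn).1 f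
  obtain ⟨u, hu, hle⟩ := exists_le_setAverage (by simp) measure_Ioc_lt_top.ne
    (integrable_kerCost (p := p) (Y := Y) (c := c) hint)
  rw [setAverage_eq, integral_kerCost hint fun n hn f => hq.setIntegral_detKer_quantileStop hn f]
    at hle
  refine ⟨quantileStop q u, hq.isStopFun_quantileStop hu.2, fun f => ?_, by simpa using hle⟩
  exact ⟨(hq.quantileStop_spec hu.2 f).1, (hq.quantileStop_spec hu.2 f).2.1⟩

end KernelCost

section FiniteDuality

variable {V : Set (ℝ × ℝ)} {D : Set ℝ} {α d : ℝ}

theorem exists_lagrange_multiplier (hV : V.Finite)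
    (hmix : ∀ x ∈ V, ∀ y ∈ V, ∀ θ ∈ Set.Icc (0 : ℝ) 1,
      θ * x.1 + (1 - θ) * y.1 ≤ α → d ≤ θ * x.2 + (1 - θ) * y.2) :
    ∃ lam, 0 ≤ lam ∧ ∀ x ∈ V, d ≤ x.2 + lam * (x.1 - α) := by
  set Λ : Set ℝ := insert 0 ((fun x => (d - x.2) / (x.1 - α)) '' {x ∈ V | α < x.1})
  have hΛ : Λ.Finite := ((hV.sep _).image _).insert 0
  set lam := sSup Λ
  have hle_lam : ∀ l ∈ Λ, l ≤ lam := fun l hl => le_csSup hΛ.bddAbove hl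
  refine ⟨lam, hle_lam 0 (Set.mem_insert _ _), fun x hx => ?_⟩
  rcases lt_or_ge α x.1 with hxα | hxα
  · have h := hle_lam _ (Set.mem_insert_of_mem _ ⟨x, ⟨hx, hxα⟩, rfl⟩)
    rw [div_le_iff₀ (sub_pos.2 hxα)] at h
    linarith
  rcases (Set.insert_nonempty _ _).csSup_mem hΛ with h0 | ⟨y, ⟨hy, hyα⟩, hy_lam⟩
  · rw [show lam = 0 from h0, zero_mul, add_zero]
    simpa using hmix x hx x hx 1 (by simp) (by simpa using hxα)
  -- mix `x` with the point `y` realising the multiplier so as to meet the constraint exactly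
  have hlam : lam * (y.1 - α) = d - y.2 := by
    rw [show lam = (d - y.2) / (y.1 - α) from hy_lam.symm, div_mul_cancel₀ _ (sub_pos.2 hyα).ne']
  set θ := (α - x.1) / (y.1 - x.1)
  have hyx : 0 < y.1 - x.1 := by linarith
  have hθ1 : θ < 1 := (div_lt_one hyx).2 (by linarith)
  have hθα : θ * y.1 + (1 - θ) * x.1 = α := by
    simp only [θ]; field_simp; ring
  have hd := hmix y hy x hx θ ⟨div_nonneg (by linarith) hyx.le, hθ1.le⟩ hθα.le
  have key : (1 - θ) * d ≤ (1 - θ) * (x.2 + lam * (x.1 - α)) := by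
    nlinarith [congrArg (θ * ·) hlam, congrArg (lam * ·) hθα]
  exact le_of_mul_le_mul_left key (by linarith)

theorem sInf_eq_sSup_lagrangian (hV : V.Finite) (hfeas : ∃ x ∈ V, x.1 ≤ α)
    (hweak : ∀ lam, 0 ≤ lam → ∀ v ∈ D, ∃ x ∈ V, x.2 + lam * x.1 - lam * α ≤ v)
    (hmix : ∀ x ∈ V, ∀ y ∈ V, ∀ θ ∈ Set.Icc (0 : ℝ) 1,
      θ * x.1 + (1 - θ) * y.1 ≤ α → θ * x.2 + (1 - θ) * y.2 ∈ D) :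
    sInf D = sSup {v | ∃ lam : ℝ, 0 ≤ lam ∧
      v = sInf ((fun x : ℝ × ℝ => x.2 + lam * x.1 - lam * α) '' V)} := by
  obtain ⟨x₀, hx₀, hx₀α⟩ := hfeas
  have hDne : D.Nonempty := ⟨_, hmix x₀ hx₀ x₀ hx₀ 1 (by simp) (by simpa using hx₀α)⟩
  have hDbdd : BddBelow D := by
    obtain ⟨m, hm⟩ := (hV.image Prod.snd).bddBelow
    refine ⟨m, fun v hv => ?_⟩
    obtain ⟨x, hx, hxv⟩ := hweak 0 le_rfl v hv
    exact (hm ⟨x, hx, rfl⟩).trans (by simpa using hxv)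
  have hle : ∀ lam, 0 ≤ lam →
      sInf ((fun x : ℝ × ℝ => x.2 + lam * x.1 - lam * α) '' V) ≤ sInf D := by
    refine fun lam hlam => le_csInf hDne fun v hv => ?_
    obtain ⟨x, hx, hxv⟩ := hweak lam hlam v hv
    exact (csInf_le (hV.image _).bddBelow ⟨x, hx, rfl⟩).trans hxv
  obtain ⟨lam, hlam, hd⟩ := exists_lagrange_multiplier (d := sInf D) hV
    fun x hx y hy θ hθ h => csInf_le hDbdd (hmix x hx y hy θ hθ h)
  have heq : sInf ((fun x : ℝ × ℝ => x.2 + lam * x.1 - lam * α) '' V) = sInf D := by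
    refine le_antisymm (hle lam hlam) (le_csInf ⟨_, x₀, hx₀, rfl⟩ ?_)
    rintro _ ⟨x, hx, rfl⟩
    linarith [hd x hx]
  symm
  refine IsGreatest.csSup_eq ⟨⟨lam, hlam, heq.symm⟩, ?_⟩
  rintro _ ⟨l, hl, rfl⟩
  exact hle l hl

end FiniteDuality

section Tracking

variable {Ω 𝒴 : Type*} [Fintype Ω] {p : Ω → ℝ} {Y : ℕ → Ω → 𝒴} {S : Ω → ℕ} {κ : ℕ}
  {t : (ℕ → 𝒴) → ℕ} {θ : ℝ}

lemma delayR_add_mul_faR (lam : ℝ) (q : ℕ → (ℕ → 𝒴) → ℝ) :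
    delayR p Y S κ q + lam * faR p Y S κ q =
      kerCost p Y κ (fun n ω => posP ((n : ℝ) - S ω) + lam * if n < S ω then 1 else 0) q :=
  (kerCost_add_mul _ _ lam q).symm

lemma faR_detKer (hb : ∀ f, 1 ≤ t f ∧ t f ≤ κ) :
    faR p Y S κ (detKer t) = exW p fun ω => if t (pathOf Y ω) < S ω then 1 else 0 :=
  kerCost_detKer hb _

lemma delayR_detKer (hb : ∀ f, 1 ≤ t f ∧ t f ≤ κ) :
    delayR p Y S κ (detKer t) = exW p fun ω => posP ((t (pathOf Y ω) : ℝ) - S ω) :=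
  kerCost_detKer hb _

lemma faR_detKer_const (hκ : 1 ≤ κ) (hSκ : ∀ ω, S ω ≤ κ) :
    faR p Y S κ (detKer fun _ => κ) = 0 := by
  rw [faR_detKer fun _ => ⟨hκ, le_rfl⟩]
  simp [exW, fun ω => not_lt.2 (hSκ ω)]

def detTradeoffs (p : Ω → ℝ) (Y : ℕ → Ω → 𝒴) (S : Ω → ℕ) (κ : ℕ) : Set (ℝ × ℝ) :=
  {x | ∃ t, IsStopFun t ∧ (∀ f, 1 ≤ t f ∧ t f ≤ κ) ∧
    x = (faR p Y S κ (detKer t), delayR p Y S κ (detKer t))}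

lemma detTradeoffs_finite : (detTradeoffs p Y S κ).Finite := by
  refine (Set.finite_range fun σ : Ω → Fin (κ + 1) =>
    ((exW p fun ω => if (σ ω : ℕ) < S ω then (1 : ℝ) else 0),
      exW p fun ω => posP ((σ ω : ℕ) - (S ω : ℝ)))).subset ?_
  rintro _ ⟨t, -, hb, rfl⟩
  exact ⟨fun ω => ⟨t (pathOf Y ω), Nat.lt_succ_of_le (hb _).2⟩,
    Prod.ext (faR_detKer hb).symm (delayR_detKer hb).symm⟩

lemma lagrangianValues_eq_image (lam α : ℝ) :
    {c | ∃ t : (ℕ → 𝒴) → ℕ, IsStopFun t ∧ (∀ f, 1 ≤ t f ∧ t f ≤ κ) ∧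
      c = delayR p Y S κ (detKer t) + lam * faR p Y S κ (detKer t) - lam * α} =
    (fun x : ℝ × ℝ => x.2 + lam * x.1 - lam * α) '' detTradeoffs p Y S κ := by
  ext c
  constructor
  · rintro ⟨t, ht, hb, rfl⟩
    exact ⟨_, ⟨t, ht, hb, rfl⟩, rfl⟩
  · rintro ⟨_, ⟨t, ht, hb, rfl⟩, rfl⟩
    exact ⟨t, ht, hb, rfl⟩

lemma IsRandST.exists_mem_detTradeoffs_le {q : ℕ → (ℕ → 𝒴) → ℝ} (hq : IsRandST q κ)
    {α lam : ℝ} (hfa : faR p Y S κ q ≤ α) (hlam : 0 ≤ lam) :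
    ∃ x ∈ detTradeoffs p Y S κ, x.2 + lam * x.1 - lam * α ≤ delayR p Y S κ q := by
  obtain ⟨t, ht, hb, hle⟩ := hq.exists_isStopFun_kerCost_le p Y
    (fun n ω => posP ((n : ℝ) - S ω) + lam * if n < S ω then 1 else 0)
  rw [← delayR_add_mul_faR, ← delayR_add_mul_faR] at hle
  exact ⟨_, ⟨t, ht, hb, rfl⟩, by linarith [mul_le_mul_of_nonneg_left hfa hlam]⟩

lemma exists_isRandST_of_mem_detTradeoffs {x y : ℝ × ℝ} (hx : x ∈ detTradeoffs p Y S κ)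
    (hy : y ∈ detTradeoffs p Y S κ) (hθ : θ ∈ Set.Icc (0 : ℝ) 1) :
    ∃ q, IsRandST q κ ∧ faR p Y S κ q = θ * x.1 + (1 - θ) * y.1 ∧
      delayR p Y S κ q = θ * x.2 + (1 - θ) * y.2 := by
  obtain ⟨t₁, ht₁, hb₁, rfl⟩ := hx
  obtain ⟨t₂, ht₂, hb₂, rfl⟩ := hy
  exact ⟨_, (isRandST_detKer ht₁ hb₁).mix (isRandST_detKer ht₂ hb₂) hθ, kerCost_mix _,
    kerCost_mix _⟩

end Tracking

theorem tst_strong_duality_general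
    {Ω 𝒴 : Type*} [Fintype Ω]
    (p : Ω → ℝ) (Y : ℕ → Ω → 𝒴) (κ : ℕ) (hκ : 1 ≤ κ)
    (S : Ω → ℕ) (hSb : ∀ ω, 1 ≤ S ω ∧ S ω ≤ κ)
    (α : ℝ) (hα : α ∈ Set.Icc (0 : ℝ) 1) :
    dW p Y S κ α =
      sSup {v | ∃ lam : ℝ, 0 ≤ lam ∧
        v = sInf {c | ∃ t : (ℕ → 𝒴) → ℕ, IsStopFun t ∧ (∀ f, 1 ≤ t f ∧ t f ≤ κ) ∧
          c = delayR p Y S κ (detKer t) + lam * faR p Y S κ (detKer t) - lam * α}} := by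
  simp only [lagrangianValues_eq_image]
  have hfeas : (faR p Y S κ (detKer fun _ => κ), delayR p Y S κ (detKer fun _ => κ)) ∈
      detTradeoffs p Y S κ := ⟨fun _ => κ, fun _ _ _ => rfl, fun _ => ⟨hκ, le_rfl⟩, rfl⟩
  refine sInf_eq_sSup_lagrangian detTradeoffs_finite
    ⟨_, hfeas, (faR_detKer_const hκ fun ω => (hSb ω).2).trans_le hα.1⟩ ?_ ?_
  · rintro lam hlam _ ⟨q, hq, hfa, rfl⟩
    exact hq.exists_mem_detTradeoffs_le hfa hlam
  · intro x hx y hy θ hθ hxy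
    obtain ⟨q, hq, hfa, hdelay⟩ := exists_isRandST_of_mem_detTradeoffs hx hy hθ
    exact ⟨q, hq, hfa ▸ hxy, hdelay.symm⟩

/-- strong Lagrange duality for the tracking stopping time problem,
with the inner minimization restricted to non-randomized stopping times bounded by κ. -/
theorem tst_strong_duality
    {Ω 𝒳 𝒴 : Type*} [Fintype Ω]
    (p : Ω → ℝ) (hp : IsProbW p) (X : ℕ → Ω → 𝒳) (Y : ℕ → Ω → 𝒴) (κ : ℕ) (hκ : 1 ≤ κ)
    (S : Ω → ℕ) (hS : IsSTW X S) (hSb : ∀ ω, 1 ≤ S ω ∧ S ω ≤ κ)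
    (α : ℝ) (hα : α ∈ Set.Icc (0 : ℝ) 1) :
    dW p Y S κ α =
      sSup {v | ∃ lam : ℝ, 0 ≤ lam ∧
        v = sInf {c | ∃ t : (ℕ → 𝒴) → ℕ, IsStopFun t ∧ (∀ f, 1 ≤ t f ∧ t f ≤ κ) ∧
          c = delayR p Y S κ (detKer t) + lam * faR p Y S κ (detKer t) - lam * α}} :=
  tst_strong_duality_general p Y κ hκ S hSb α hα
end

section
/- Backward induction characterizes the minimal-cost subtree: for any |Y|-ary tree T, λ ≥ 0, and internal node y, J_λ(T_y(λ)) = min{ J_λ(y), Σ_{γ∈Y} J_λ(T_{yγ}(λ)) }, and T_y(λ) equals {y} if J_λ(y) ≤ Σ_γ J_λ(T_{yγ}(λ)), and equals {y} ∪ ⋃_γ T_{yγ}(λ) otherwise. -/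
open Finset
open scoped Classical

set_option linter.unusedSectionVars false

noncomputable section Helpers

variable {Ω : Type*} [Fintype Ω] {𝒴 : Type*} [Fintype 𝒴]

lemma extN_append (y : List 𝒴) (γ : 𝒴) (f : ℕ → 𝒴) :
    ExtN (y ++ [γ]) f ↔ ExtN y f ∧ f (y.length + 1) = γ := by
  constructor
  · intro h
    refine ⟨fun i => ?_, ?_⟩
    · have := h ⟨i.1, by simp only [List.length_append, List.length_singleton]; omega⟩
      simpa [List.get_eq_getElem, List.getElem_append_left (i.2)] using this
    · have := h ⟨y.length, by simp⟩
      simpa [List.get_eq_getElem, List.getElem_append_right (le_refl y.length)] using this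
  · rintro ⟨h1, h2⟩ i
    rcases lt_or_ge i.1 y.length with hi | hi
    · have := h1 ⟨i.1, hi⟩
      simpa [List.get_eq_getElem, List.getElem_append_left hi] using this
    · have hi' : i.1 = y.length := by
        have := i.2
        simp only [List.length_append, List.length_singleton] at this
        omega
      simp [List.get_eq_getElem, hi', List.getElem_append_right (le_refl y.length), h2]

lemma extN_prefix_eq (y : List 𝒴) (f g : ℕ → 𝒴) (hf : ExtN y f) (hg : ExtN y g)
    (i : ℕ) (h1 : 1 ≤ i) (h2 : i ≤ y.length) : f i = g i := by
  have hlt : i - 1 < y.length := by omega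
  have hf' := hf ⟨i - 1, hlt⟩
  have hg' := hg ⟨i - 1, hlt⟩
  have : i - 1 + 1 = i := by omega
  rw [this] at hf' hg'
  rw [hf', hg']

lemma split_pt (y : List 𝒴) (f : ℕ → 𝒴) (X : ℝ) :
    ∑ γ : 𝒴, (if ExtN (y ++ [γ]) f then X else 0) = if ExtN y f then X else 0 := by
  simp only [extN_append]
  by_cases h : ExtN y f
  · simp [h, Finset.sum_ite_eq]
  · simp [h]

lemma split_pt' (y : List 𝒴) (f : ℕ → 𝒴) (X : ℝ) (P : Prop) :
    ∑ γ : 𝒴, (if ExtN (y ++ [γ]) f ∧ P then X else 0) = if ExtN y f ∧ P then X else 0 := by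
  by_cases hP : P
  · simp only [hP, and_true]
    exact split_pt y f X
  · simp [hP]

lemma jsub_split (p : Ω → ℝ) (Y : ℕ → Ω → 𝒴) (S : Ω → ℕ) (lam : ℝ) (y : List 𝒴)
    (w : (ℕ → 𝒴) → ℕ) :
    JsubW p Y S lam y w = ∑ γ : 𝒴, JsubW p Y S lam (y ++ [γ]) w := by
  unfold JsubW bSubW aSubW exW prW
  rw [Finset.sum_add_distrib, ← Finset.mul_sum]
  congr 1
  · rw [Finset.sum_comm]
    refine Finset.sum_congr rfl fun ω _ => ?_
    rw [← Finset.mul_sum, split_pt]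
  · congr 1
    rw [Finset.sum_comm]
    refine Finset.sum_congr rfl fun ω _ => ?_
    beta_reduce
    have h := (split_pt' y (pathOf Y ω) (p ω) (w (pathOf Y ω) < S ω)).symm
    convert h using 2 with γ _
    congr 1

lemma jsub_congr (p : Ω → ℝ) (Y : ℕ → Ω → 𝒴) (S : Ω → ℕ) (lam : ℝ) (z : List 𝒴)
    (w1 w2 : (ℕ → 𝒴) → ℕ) (h : ∀ f, ExtN z f → w1 f = w2 f) :
    JsubW p Y S lam z w1 = JsubW p Y S lam z w2 := by
  unfold JsubW bSubW aSubW exW prW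
  congr 1
  · refine Finset.sum_congr rfl fun ω _ => ?_
    beta_reduce
    by_cases hE : ExtN z (pathOf Y ω)
    · rw [h _ hE]
    · simp [hE]
  · congr 1
    refine Finset.sum_congr rfl fun ω _ => ?_
    beta_reduce
    by_cases hE : ExtN z (pathOf Y ω)
    · rw [h _ hE]
    · simp [hE]

lemma jsub_node (p : Ω → ℝ) (Y : ℕ → Ω → 𝒴) (S : Ω → ℕ) (lam : ℝ) (y : List 𝒴)
    (w : (ℕ → 𝒴) → ℕ) (h : ∀ f, ExtN y f → w f = y.length) :
    JsubW p Y S lam y w = JnodeW p Y S lam y := by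
  unfold JsubW bSubW aSubW exW prW JnodeW bW aW exW prW
  congr 1
  · refine Finset.sum_congr rfl fun ω _ => ?_
    beta_reduce
    by_cases hE : ExtN y (pathOf Y ω)
    · rw [h _ hE]
    · simp [hE]
  · congr 1
    refine Finset.sum_congr rfl fun ω _ => ?_
    beta_reduce
    by_cases hE : ExtN y (pathOf Y ω)
    · simp [hE, h _ hE]
    · simp [hE]

end Helpers

/-- backward-induction characterization of the minimal-cost subtree:
`J_λ(T_y(λ)) = min{J_λ(y), Σ_γ J_λ(T_{yγ}(λ))}` and the corresponding shape of `T_y(λ)`. -/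
theorem backward_induction_opt_subtree
    {Ω 𝒳 𝒴 : Type*} [Fintype Ω] [Fintype 𝒴]
    (p : Ω → ℝ) (hp : IsProbW p) (X : ℕ → Ω → 𝒳) (Y : ℕ → Ω → 𝒴) (κ : ℕ)
    (S : Ω → ℕ) (hS : IsSTW X S) (hSb : ∀ ω, S ω ≤ κ)
    (lam : ℝ) (hlam : 0 ≤ lam)
    (t : (ℕ → 𝒴) → ℕ) (ht : IsStopFun t) (htb : ∀ f, t f ≤ κ)
    (y : List 𝒴) (hy : InternalNode t y)
    (u : (ℕ → 𝒴) → ℕ) (hu : IsOptSubtreeAt p Y S lam t y u)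
    (uc : 𝒴 → (ℕ → 𝒴) → ℕ)
    (huc : ∀ γ : 𝒴, IsOptSubtreeAt p Y S lam t (y ++ [γ]) (uc γ)) :
    JsubW p Y S lam y u =
      min (JnodeW p Y S lam y) (∑ γ : 𝒴, JsubW p Y S lam (y ++ [γ]) (uc γ)) ∧
    (if JnodeW p Y S lam y ≤ ∑ γ : 𝒴, JsubW p Y S lam (y ++ [γ]) (uc γ)
      then ∀ f, ExtN y f → u f = y.length
      else ∀ (γ : 𝒴) (f : ℕ → 𝒴), ExtN (y ++ [γ]) f → u f = uc γ f) := by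
  obtain ⟨⟨huSF, huge⟩, hule, humin, husmall⟩ := hu
  by_cases hne : Nonempty 𝒴
  case neg =>
    haveI hE𝒴 : IsEmpty 𝒴 := not_nonempty_iff.mp hne
    haveI hEf : IsEmpty (ℕ → 𝒴) := ⟨fun f => IsEmpty.false (f 0)⟩
    haveI hEΩ : IsEmpty Ω := ⟨fun ω => IsEmpty.false (Y 0 ω)⟩
    have hz : JsubW p Y S lam y u = 0 := by
      simp [JsubW, bSubW, aSubW, exW, prW, Finset.univ_eq_empty]
    have hz2 : JnodeW p Y S lam y = 0 := by
      simp [JnodeW, bW, aW, exW, prW, Finset.univ_eq_empty]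
    have hz3 : (∑ γ : 𝒴, JsubW p Y S lam (y ++ [γ]) (uc γ)) = 0 := by
      simp [Finset.univ_eq_empty]
    refine ⟨by rw [hz, hz2, hz3]; simp, ?_⟩
    split
    · exact fun f _ => isEmptyElim f
    · exact fun γ => isEmptyElim γ
  case pos =>
    obtain ⟨c⟩ := hne
    -- a canonical path through y
    set f0 : ℕ → 𝒴 := fun i => if h : i - 1 < y.length then y.get ⟨i - 1, h⟩ else c with hf0def
    have hf0 : ExtN y f0 := by
      intro i
      show (if h : (i.1 + 1) - 1 < y.length then y.get ⟨(i.1 + 1) - 1, h⟩ else c) = y.get i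
      simp only [Nat.add_sub_cancel]
      rw [dif_pos i.2]
    -- candidate v1 : stop immediately at y
    set v1 : (ℕ → 𝒴) → ℕ := fun _ => y.length with hv1def
    have hv1sub : IsSubtreeAt y v1 := ⟨fun f g _ => rfl, fun f _ => le_refl _⟩
    have hv1le : ∀ f, ExtN y f → v1 f ≤ t f := fun f hf => le_of_lt (hy f hf)
    have hv1J : JsubW p Y S lam y v1 = JnodeW p Y S lam y :=
      jsub_node p Y S lam y v1 fun f _ => rfl
    have h1 : JsubW p Y S lam y u ≤ JnodeW p Y S lam y := hv1J ▸ humin v1 hv1sub hv1le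
    -- candidate v2 : glue the optimal subtrees at the children
    set v2 : (ℕ → 𝒴) → ℕ := fun f => max (uc (f (y.length + 1)) f) (y.length + 1) with hv2def
    have hv2SF : IsStopFun v2 := by
      intro f g hag
      have hγ : g (y.length + 1) = f (y.length + 1) :=
        (hag (y.length + 1) (by omega) (le_max_right _ _)).symm
      have huc' : uc (f (y.length + 1)) g = uc (f (y.length + 1)) f :=
        (huc (f (y.length + 1))).1.1 f g
          (fun i hi1 hi2 => hag i hi1 (le_trans hi2 (le_max_left _ _)))
      show max (uc (g (y.length + 1)) g) (y.length + 1) = max (uc (f (y.length + 1)) f) (y.length + 1)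
      rw [hγ, huc']
    have hv2sub : IsSubtreeAt y v2 :=
      ⟨hv2SF, fun f hf => le_trans (by omega) (le_max_right _ _)⟩
    have hv2le : ∀ f, ExtN y f → v2 f ≤ t f := by
      intro f hf
      have hf' : ExtN (y ++ [f (y.length + 1)]) f := (extN_append _ _ _).mpr ⟨hf, rfl⟩
      exact max_le ((huc _).2.1 f hf') (hy f hf)
    have hv2eq : ∀ γ : 𝒴, ∀ f, ExtN (y ++ [γ]) f → v2 f = uc γ f := by
      intro γ f hf
      obtain ⟨hfy, hfγ⟩ := (extN_append _ _ _).mp hf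
      have hge : y.length + 1 ≤ uc γ f := by
        have := (huc γ).1.2 f hf
        simpa using this
      show max (uc (f (y.length + 1)) f) (y.length + 1) = uc γ f
      rw [hfγ]
      exact max_eq_left hge
    have hv2J : JsubW p Y S lam y v2 = ∑ γ : 𝒴, JsubW p Y S lam (y ++ [γ]) (uc γ) := by
      rw [jsub_split]
      exact Finset.sum_congr rfl fun γ _ => jsub_congr p Y S lam _ v2 (uc γ) (hv2eq γ)
    have h2 : JsubW p Y S lam y u ≤ ∑ γ : 𝒴, JsubW p Y S lam (y ++ [γ]) (uc γ) :=
      hv2J ▸ humin v2 hv2sub hv2le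
    by_cases hA : ∃ f, ExtN y f ∧ u f = y.length
    · -- Case A : u stops at y
      obtain ⟨g0, hg0, hg0u⟩ := hA
      have hAall : ∀ f, ExtN y f → u f = y.length := by
        intro f hf
        have := huSF g0 f (fun i hi1 hi2 => extN_prefix_eq y g0 f hg0 hf i hi1 (by omega))
        omega
      have hJu : JsubW p Y S lam y u = JnodeW p Y S lam y := jsub_node p Y S lam y u hAall
      have hcond : JnodeW p Y S lam y ≤ ∑ γ : 𝒴, JsubW p Y S lam (y ++ [γ]) (uc γ) :=
        hJu ▸ h2
      refine ⟨by rw [hJu, min_eq_left hcond], ?_⟩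
      rw [if_pos hcond]
      exact hAall
    · -- Case B : u continues past y
      push_neg at hA
      have hB : ∀ f, ExtN y f → y.length + 1 ≤ u f := by
        intro f hf
        have h1' := huge f hf
        have h2' := hA f hf
        omega
      have husubγ : ∀ γ : 𝒴, IsSubtreeAt (y ++ [γ]) u := by
        intro γ
        refine ⟨huSF, fun f hf => ?_⟩
        have hfy := ((extN_append _ _ _).mp hf).1
        simpa using hB f hfy
      have huleγ : ∀ γ : 𝒴, ∀ f, ExtN (y ++ [γ]) f → u f ≤ t f :=
        fun γ f hf => hule f ((extN_append _ _ _).mp hf).1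
      have hγle : ∀ γ : 𝒴,
          JsubW p Y S lam (y ++ [γ]) (uc γ) ≤ JsubW p Y S lam (y ++ [γ]) u :=
        fun γ => (huc γ).2.2.1 u (husubγ γ) (huleγ γ)
      have hsplitu : JsubW p Y S lam y u = ∑ γ : 𝒴, JsubW p Y S lam (y ++ [γ]) u :=
        jsub_split p Y S lam y u
      have hge : ∑ γ : 𝒴, JsubW p Y S lam (y ++ [γ]) (uc γ) ≤ JsubW p Y S lam y u := by
        rw [hsplitu]
        exact Finset.sum_le_sum fun γ _ => hγle γ
      have hJu : JsubW p Y S lam y u = ∑ γ : 𝒴, JsubW p Y S lam (y ++ [γ]) (uc γ) :=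
        le_antisymm h2 hge
      have hterm : ∀ γ ∈ (Finset.univ : Finset 𝒴),
          JsubW p Y S lam (y ++ [γ]) (uc γ) = JsubW p Y S lam (y ++ [γ]) u := by
        rw [← Finset.sum_eq_sum_iff_of_le fun γ _ => hγle γ]
        rw [← hJu, ← hsplitu]
      have hucle : ∀ γ f, ExtN (y ++ [γ]) f → uc γ f ≤ u f :=
        fun γ f hf =>
          (huc γ).2.2.2 u (husubγ γ) (huleγ γ) (hterm γ (Finset.mem_univ γ)).symm f hf
      have hJv2 : JsubW p Y S lam y v2 = JsubW p Y S lam y u := by rw [hv2J, hJu]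
      have hule2 : ∀ f, ExtN y f → u f ≤ v2 f := husmall v2 hv2sub hv2le hJv2
      have hule3 : ∀ γ f, ExtN (y ++ [γ]) f → u f ≤ uc γ f := by
        intro γ f hf
        have := hule2 f ((extN_append _ _ _).mp hf).1
        rwa [hv2eq γ f hf] at this
      have hcond : ¬ JnodeW p Y S lam y ≤ ∑ γ : 𝒴, JsubW p Y S lam (y ++ [γ]) (uc γ) := by
        intro hc
        have hle' : JnodeW p Y S lam y ≤ JsubW p Y S lam y u := by rw [hJu]; exact hc
        have hv1Ju : JsubW p Y S lam y v1 = JsubW p Y S lam y u := by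
          rw [hv1J]
          exact (le_antisymm h1 hle').symm
        have hsm := husmall v1 hv1sub hv1le hv1Ju f0 hf0
        have := hB f0 hf0
        simp only [hv1def] at hsm
        omega
      refine ⟨by rw [hJu, min_eq_right (le_of_not_ge hcond)], ?_⟩
      rw [if_neg hcond]
      exact fun γ f hf => le_antisymm (hule3 γ f hf) (hucle γ f hf)
end

section
/- Monotonicity of optimal subtrees in the Lagrange multiplier: for any tree T and 0 ≤ λ ≤ λ̃, the optimal subtree satisfies T(λ) ⊆ T(λ̃). -/
open Finset
open scoped Classical

lemma extn_nil {𝒴 : Type*} (f : ℕ → 𝒴) : ExtN ([] : List 𝒴) f := fun i => i.elim0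

lemma stopfun_min {𝒴 : Type*} {u v : (ℕ → 𝒴) → ℕ} (hu : IsStopFun u) (hv : IsStopFun v) :
    IsStopFun (fun f => min (u f) (v f)) := by
  intro f g h0
  have h : ∀ i, 1 ≤ i → i ≤ min (u f) (v f) → f i = g i := h0
  rcases le_total (u f) (v f) with hle | hle
  · have hm : min (u f) (v f) = u f := min_eq_left hle
    have hug : u g = u f := hu f g fun i h1 h2 => h i h1 (by omega)
    have hvg : u f ≤ v g := by
      by_contra hc
      push_neg at hc
      have : v f = v g := hv g f fun i h1 h2 => (h i h1 (by omega)).symm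
      omega
    show min (u g) (v g) = min (u f) (v f)
    omega
  · have hm : min (u f) (v f) = v f := min_eq_right hle
    have hvg : v g = v f := hv f g fun i h1 h2 => h i h1 (by omega)
    have hug : v f ≤ u g := by
      by_contra hc
      push_neg at hc
      have : u f = u g := hu g f fun i h1 h2 => (h i h1 (by omega)).symm
      omega
    show min (u g) (v g) = min (u f) (v f)
    omega

lemma stopfun_max {𝒴 : Type*} {u v : (ℕ → 𝒴) → ℕ} (hu : IsStopFun u) (hv : IsStopFun v) :
    IsStopFun (fun f => max (u f) (v f)) := by
  intro f g h0
  have h : ∀ i, 1 ≤ i → i ≤ max (u f) (v f) → f i = g i := h0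
  rcases le_total (u f) (v f) with hle | hle
  · have hvg : v g = v f := hv f g fun i h1 h2 => h i h1 (by omega)
    have hug : u g = u f := hu f g fun i h1 h2 => h i h1 (by omega)
    show max (u g) (v g) = max (u f) (v f)
    omega
  · have hvg : v g = v f := hv f g fun i h1 h2 => h i h1 (by omega)
    have hug : u g = u f := hu f g fun i h1 h2 => h i h1 (by omega)
    show max (u g) (v g) = max (u f) (v f)
    omega

lemma posP_minmax (a b : ℕ) (s : ℝ) :
    posP ((min a b : ℕ) - s) + posP ((max a b : ℕ) - s) = posP ((a : ℝ) - s) + posP ((b : ℝ) - s) := by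
  rcases le_total a b with h | h
  · rw [min_eq_left h, max_eq_right h]
  · rw [min_eq_right h, max_eq_left h, add_comm]

lemma ind_minmax (a b s : ℕ) (c : ℝ) :
    (if min a b < s then c else 0) + (if max a b < s then c else 0) =
    (if a < s then c else 0) + (if b < s then c else 0) := by
  rcases le_total a b with h | h
  · rw [min_eq_left h, max_eq_right h]
  · rw [min_eq_right h, max_eq_left h, add_comm]

/-- monotonicity of the optimal subtree in the Lagrange multiplier:
if `λ ≤ λ̃` then `T(λ) ⊆ T(λ̃)` (the smaller multiplier's optimal tree stops earlier). -/
theorem opt_subtree_monotone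
    {Ω 𝒳 𝒴 : Type*} [Fintype Ω]
    (p : Ω → ℝ) (hp : IsProbW p) (X : ℕ → Ω → 𝒳) (Y : ℕ → Ω → 𝒴) (κ : ℕ)
    (S : Ω → ℕ) (hS : IsSTW X S) (hSb : ∀ ω, S ω ≤ κ)
    (lam lam' : ℝ) (h0 : 0 ≤ lam) (hll : lam ≤ lam')
    (t : (ℕ → 𝒴) → ℕ) (ht : IsStopFun t) (htb : ∀ f, t f ≤ κ)
    (u u' : (ℕ → 𝒴) → ℕ)
    (hu : IsOptSubtreeAt p Y S lam t ([] : List 𝒴) u)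
    (hu' : IsOptSubtreeAt p Y S lam' t ([] : List 𝒴) u') :
    ∀ f, u f ≤ u' f := by
  obtain ⟨⟨hust, -⟩, hut, humin, husm⟩ := hu
  obtain ⟨⟨hust', -⟩, hut', humin', -⟩ := hu'
  have hmsub : IsSubtreeAt ([] : List 𝒴) (fun f => min (u f) (u' f)) :=
    ⟨stopfun_min hust hust', fun f _ => Nat.zero_le _⟩
  have hMsub : IsSubtreeAt ([] : List 𝒴) (fun f => max (u f) (u' f)) :=
    ⟨stopfun_max hust hust', fun f _ => Nat.zero_le _⟩
  have hmt : ∀ f, ExtN ([] : List 𝒴) f → min (u f) (u' f) ≤ t f :=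
    fun f hf => le_trans (min_le_left _ _) (hut f hf)
  have hMt : ∀ f, ExtN ([] : List 𝒴) f → max (u f) (u' f) ≤ t f :=
    fun f hf => max_le (hut f hf) (hut' f hf)
  -- identity for b
  have hidb : bSubW p Y S [] (fun f => min (u f) (u' f)) +
      bSubW p Y S [] (fun f => max (u f) (u' f)) =
      bSubW p Y S [] u + bSubW p Y S [] u' := by
    unfold bSubW exW
    rw [← Finset.sum_add_distrib, ← Finset.sum_add_distrib]
    refine Finset.sum_congr rfl fun ω _ => ?_
    simp only [if_pos (extn_nil _)]
    show p ω * posP ((min (u (pathOf Y ω)) (u' (pathOf Y ω)) : ℕ) - (S ω : ℝ)) +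
        p ω * posP ((max (u (pathOf Y ω)) (u' (pathOf Y ω)) : ℕ) - (S ω : ℝ)) = _
    rw [← mul_add, ← mul_add, posP_minmax]
  -- identity for a
  have hida : aSubW p Y S [] (fun f => min (u f) (u' f)) +
      aSubW p Y S [] (fun f => max (u f) (u' f)) =
      aSubW p Y S [] u + aSubW p Y S [] u' := by
    unfold aSubW prW
    rw [← Finset.sum_add_distrib, ← Finset.sum_add_distrib]
    refine Finset.sum_congr rfl fun ω _ => ?_
    simp only [extn_nil (pathOf Y ω), true_and]
    show (if min (u (pathOf Y ω)) (u' (pathOf Y ω)) < S ω then p ω else 0) +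
        (if max (u (pathOf Y ω)) (u' (pathOf Y ω)) < S ω then p ω else 0) = _
    rw [ind_minmax]
  -- a of the max tree is at most a of u'
  have haM : aSubW p Y S [] (fun f => max (u f) (u' f)) ≤ aSubW p Y S [] u' := by
    unfold aSubW prW
    refine Finset.sum_le_sum fun ω _ => ?_
    simp only [extn_nil (pathOf Y ω), true_and]
    split_ifs with h1 h2
    · exact le_refl _
    · exact absurd (lt_of_le_of_lt (le_max_right _ _) h1) h2
    · exact hp.1 ω
    · exact le_refl _
  have h1 : JsubW p Y S lam [] u ≤ JsubW p Y S lam [] (fun f => min (u f) (u' f)) :=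
    humin _ hmsub hmt
  have h2 : JsubW p Y S lam' [] u' ≤ JsubW p Y S lam' [] (fun f => max (u f) (u' f)) :=
    humin' _ hMsub hMt
  have hmul : 0 ≤ (lam' - lam) * (aSubW p Y S [] u' -
      aSubW p Y S [] (fun f => max (u f) (u' f))) :=
    mul_nonneg (by linarith) (by linarith)
  have heq : JsubW p Y S lam [] (fun f => min (u f) (u' f)) = JsubW p Y S lam [] u := by
    unfold JsubW at h1 h2 ⊢
    nlinarith [hidb, hida, hmul, h1, h2]
  exact fun f => le_trans (husm _ hmsub hmt heq f (extn_nil f)) (min_le_right _ _)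
end

section
/- If {(X_i,Y_i)}_{i≥1} are i.i.d. and S is a permutation invariant stopping time with respect to {X_i}, then S is a permutation invariant (randomized) stopping time with respect to {Y_i}: P(S ≤ n | Y^n = y^n) = P(S ≤ n | Y^n = π(y^n)) for all n, y^n, and coordinate permutations π. -/
open Finset
open scoped Classical

/-!
Write `X^n`, `Y^n` for the first `n` observations. Since `S` is a stopping time for `X`,
`{S ≤ n} = {X^n ∈ A}`, where `A` is the set of strings `x` such that `S ≤ n` on all of
`{X^n = x}`; invariance of `S` under permutations of `X` says that `x ∈ A ↔ x ∘ π ∈ A` whenever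
both `{X^n = x}` and `{X^n = x ∘ π}` have positive probability. The joint law
`q x y = ∏ μ (x i, y i)` of `(X^n, Y^n)` is invariant under permuting both strings at once, so
`P(S ≤ n, Y^n = y ∘ π) = ∑_{x ∈ A} q x (y ∘ π) = ∑_{x ∘ π ∈ A} q x y = ∑_{x ∈ A} q x y`,
the last step because `q x y > 0` forces positive probability on `{X^n = x}` and on
`{X^n = x ∘ π}`. The same reindexing gives `P(Y^n = y ∘ π) = P(Y^n = y)`.
-/

section PermInvTransfer

variable {Ω α β : Type*}

def initSeg (Z : ℕ → Ω → α) (n : ℕ) (ω : Ω) : Fin n → α := fun i => Z (i.1 + 1) ω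

lemma initSeg_succ (Z : ℕ → Ω → α) (n : ℕ) (ω : Ω) :
    initSeg Z (n + 1) ω = Fin.snoc (initSeg Z n ω) (Z (n + 1) ω) := by
  funext i
  induction i using Fin.lastCases <;> simp [initSeg]

lemma extN_ofFn_iff {m : ℕ} (u : Fin m → α) (f : ℕ → α) :
    ExtN (List.ofFn u) f ↔ ∀ i : Fin m, f (i.1 + 1) = u i := by
  constructor
  · intro h i
    simpa using h (Fin.cast List.length_ofFn.symm i)
  · intro h i
    rw [List.get_ofFn]
    exact h (Fin.cast List.length_ofFn i)

lemma extN_pathOf_iff (Z : ℕ → Ω → α) (y : List α) (ω : Ω) :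
    ExtN y (pathOf Z ω) ↔ initSeg Z y.length ω = y.get :=
  funext_iff.symm

lemma extN_pathOf_permNode_iff (Z : ℕ → Ω → α) (y : List α) (π : Equiv.Perm (Fin y.length))
    (ω : Ω) : ExtN (permNode y π) (pathOf Z ω) ↔ initSeg Z y.length ω = y.get ∘ π :=
  (extN_ofFn_iff _ _).trans funext_iff.symm

def StopsBy (X : ℕ → Ω → α) (S : Ω → ℕ) (n : ℕ) (u : Fin n → α) : Prop :=
  ∀ ω, initSeg X n ω = u → S ω ≤ n

lemma IsSTW.le_iff_stopsBy {X : ℕ → Ω → α} {S : Ω → ℕ} (hS : IsSTW X S) (n : ℕ) (ω : Ω) :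
    S ω ≤ n ↔ StopsBy X S n (initSeg X n ω) := by
  refine ⟨fun hle ω' hω' => ?_, fun h => h ω rfl⟩
  have hagree : ∀ i, 1 ≤ i → i ≤ S ω → X i ω = X i ω' := fun i hi1 hi2 => by
    obtain ⟨j, rfl⟩ : ∃ j, i = j + 1 := ⟨i - 1, by omega⟩
    exact (congrFun hω' ⟨j, by omega⟩).symm
  rw [hS ω ω' hagree]
  exact hle

lemma sum_ite_comp_perm {ι M : Type*} [Fintype ι] [DecidableEq ι] [Fintype α] [AddCommMonoid M]
    (π : Equiv.Perm ι) {q r : (ι → α) → M} (hqr : ∀ u, r (u ∘ π) = q u) {A : (ι → α) → Prop}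
    (hA : ∀ u, q u ≠ 0 → (A (u ∘ π) ↔ A u)) :
    ∑ u, (if A u then r u else 0) = ∑ u, if A u then q u else 0 := by
  rw [← (π.symm.arrowCongr (Equiv.refl α)).sum_comp]
  refine Finset.sum_congr rfl fun u _ => ?_
  change (if A (u ∘ π) then r (u ∘ π) else 0) = _
  rw [hqr]
  by_cases hu : q u = 0
  · simp [hu]
  · rw [if_congr (hA u hu) rfl rfl]

variable [Fintype Ω]

lemma prW_congr (p : Ω → ℝ) {A B : Ω → Prop} (h : ∀ ω, A ω ↔ B ω) : prW p A = prW p B :=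
  congrArg (prW p) (funext fun ω => propext (h ω))

lemma prW_false (p : Ω → ℝ) : prW p (fun _ => False) = 0 := by
  simp [prW]

lemma prW_eq_sum_prW_eq_and [Fintype β] (p : Ω → ℝ) (Z : Ω → β) (B : Ω → Prop) :
    prW p B = ∑ b, prW p (fun ω => Z ω = b ∧ B ω) := by
  unfold prW
  rw [← Finset.sum_fiberwise univ Z]
  refine Finset.sum_congr rfl fun b _ => ?_
  rw [Finset.sum_filter]
  exact Finset.sum_congr rfl fun ω _ => by by_cases hZ : Z ω = b <;> simp [hZ]

lemma prW_comp_and_eq_sum [Fintype β] (p : Ω → ℝ) (Z : Ω → β) (A : β → Prop) (B : Ω → Prop) :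
    prW p (fun ω => A (Z ω) ∧ B ω) = ∑ b, if A b then prW p (fun ω => Z ω = b ∧ B ω) else 0 := by
  rw [prW_eq_sum_prW_eq_and p Z]
  refine Finset.sum_congr rfl fun b _ => ?_
  split_ifs with hb
  · exact prW_congr p fun ω => ⟨fun h => ⟨h.1, h.2.2⟩, fun h => ⟨h.1, h.1 ▸ hb, h.2⟩⟩
  · rw [prW_congr p (B := fun _ => False) fun ω => iff_false_intro ?_, prW_false]
    rintro ⟨rfl, hA, -⟩
    exact hb hA

lemma cprW_comp_eq_ite (p : Ω → ℝ) (Z : Ω → β) (A : β → Prop) {b : β}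
    (hb : prW p (fun ω => Z ω = b) ≠ 0) :
    cprW p (fun ω => A (Z ω)) (fun ω => Z ω = b) = if A b then 1 else 0 := by
  unfold cprW
  split_ifs with h
  · rw [prW_congr p fun ω => ⟨And.right, fun hω => ⟨hω ▸ h, hω⟩⟩]
    exact div_self hb
  · rw [prW_congr p (B := fun _ => False) fun ω => iff_false_intro ?_, prW_false, zero_div]
    rintro ⟨hA, rfl⟩
    exact h hA

lemma PermInvST.cprW_initSeg_comp {p : Ω → ℝ} {X : ℕ → Ω → α} {T : Ω → ℕ} {κ n : ℕ}
    (hT : PermInvST p X T κ) (hn : n ≤ κ) (u : Fin n → α) (π : Equiv.Perm (Fin n)) :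
    cprW p (fun ω => T ω ≤ n) (fun ω => initSeg X n ω = u) =
      cprW p (fun ω => T ω ≤ n) (fun ω => initSeg X n ω = u ∘ π) := by
  obtain ⟨x, hx, rfl⟩ : ∃ x : List α, ∃ hx : x.length = n, u = x.get ∘ Fin.cast hx.symm :=
    ⟨List.ofFn u, List.length_ofFn, by ext; simp⟩
  subst hx
  have h := hT x hn π
  simp only [extN_pathOf_permNode_iff] at h
  simpa only [extN_pathOf_iff, Fin.cast_refl, Function.comp_id] using h

lemma stopsBy_comp_perm_iff {p : Ω → ℝ} {X : ℕ → Ω → α} {S : Ω → ℕ} {κ n : ℕ}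
    (hS : IsSTW X S) (hperm : PermInvST p X S κ) (hn : n ≤ κ) {u : Fin n → α}
    {π : Equiv.Perm (Fin n)} (hu : prW p (fun ω => initSeg X n ω = u) ≠ 0)
    (huπ : prW p (fun ω => initSeg X n ω = u ∘ π) ≠ 0) :
    StopsBy X S n (u ∘ π) ↔ StopsBy X S n u := by
  have h := hperm.cprW_initSeg_comp hn u π
  simp only [hS.le_iff_stopsBy n] at h
  rw [cprW_comp_eq_ite p _ _ hu, cprW_comp_eq_ite p _ _ huπ] at h
  split_ifs at h <;> simp_all

lemma prW_initSeg_eq_prod_of_law [Nonempty α] {p : Ω → ℝ} {Z : ℕ → Ω → α} {μ : α → ℝ} {κ : ℕ}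
    (hlaw : ∀ z : ℕ → α,
      prW p (fun ω => ∀ i, 1 ≤ i → i ≤ κ → Z i ω = z i) = ∏ i ∈ Icc 1 κ, μ (z i))
    (u : Fin κ → α) :
    prW p (fun ω => initSeg Z κ ω = u) = ∏ i, μ (u i) := by
  set z : ℕ → α := fun i => if h : i - 1 < κ then u ⟨i - 1, h⟩ else Classical.arbitrary α
  have hz : ∀ i : Fin κ, z (i + 1) = u i := fun i => by simp [z]
  have hev : ∀ ω, (∀ i, 1 ≤ i → i ≤ κ → Z i ω = z i) ↔ initSeg Z κ ω = u := by
    refine fun ω => ⟨fun h => funext fun i => (h (i + 1) (by omega) (by omega)).trans (hz i),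
      fun h i hi1 hi2 => ?_⟩
    obtain ⟨j, rfl⟩ : ∃ j, i = j + 1 := ⟨i - 1, by omega⟩
    exact (congrFun h ⟨j, by omega⟩).trans (hz ⟨j, by omega⟩).symm
  rw [← prW_congr p hev, hlaw z, ← Finset.Ico_add_one_right_eq_Icc, Finset.prod_Ico_eq_prod_range,
    Nat.add_sub_cancel, ← Fin.prod_univ_eq_prod_range]
  exact Finset.prod_congr rfl fun i _ => by rw [add_comm, hz]

lemma prW_initSeg_eq_prod [Fintype α] [Nonempty α] {p : Ω → ℝ} {Z : ℕ → Ω → α} {μ : α → ℝ}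
    {κ : ℕ} (hμ : ∑ a, μ a = 1)
    (hlaw : ∀ z : ℕ → α,
      prW p (fun ω => ∀ i, 1 ≤ i → i ≤ κ → Z i ω = z i) = ∏ i ∈ Icc 1 κ, μ (z i))
    {n : ℕ} (hn : n ≤ κ) (u : Fin n → α) :
    prW p (fun ω => initSeg Z n ω = u) = ∏ i, μ (u i) := by
  induction hn using Nat.decreasingInduction with
  | self => exact prW_initSeg_eq_prod_of_law hlaw u
  | of_succ m _ ih =>
    have hstep : ∀ a, prW p (fun ω => Z (m + 1) ω = a ∧ initSeg Z m ω = u) =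
        (∏ i, μ (u i)) * μ a := fun a => by
      rw [prW_congr p (B := fun ω => initSeg Z (m + 1) ω = Fin.snoc u a) fun ω => by
        rw [initSeg_succ, Fin.snoc_inj, and_comm], ih, Fin.prod_univ_castSucc]
      simp only [Fin.snoc_castSucc, Fin.snoc_last]
    rw [prW_eq_sum_prW_eq_and p (Z (m + 1)), Finset.sum_congr rfl fun a _ => hstep a,
      ← Finset.mul_sum, hμ, mul_one]

lemma IIDPairs.exists_exchangeable_law [Fintype α] [Fintype β] [Nonempty α]
    [Nonempty β] {p : Ω → ℝ} {X : ℕ → Ω → α} {Y : ℕ → Ω → β} {κ n : ℕ} (h : IIDPairs p X Y κ)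
    (hn : n ≤ κ) :
    ∃ q : (Fin n → α) → (Fin n → β) → ℝ, (∀ u w, 0 ≤ q u w) ∧
      (∀ (π : Equiv.Perm (Fin n)) u w, q (u ∘ π) (w ∘ π) = q u w) ∧
      ∀ u w, prW p (fun ω => initSeg X n ω = u ∧ initSeg Y n ω = w) = q u w := by
  obtain ⟨μ, hμ0, hμ1, hlaw⟩ := h
  refine ⟨fun u w => ∏ i, μ (u i, w i), fun u w => Finset.prod_nonneg fun i _ => hμ0 _,
    fun π u w => Equiv.prod_comp π fun i => μ (u i, w i), fun u w => ?_⟩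
  have hpair : ∀ z : ℕ → α × β,
      prW p (fun ω => ∀ i, 1 ≤ i → i ≤ κ → (X i ω, Y i ω) = z i) = ∏ i ∈ Icc 1 κ, μ (z i) :=
    fun z => by
      simpa only [Prod.ext_iff, Function.comp_apply] using hlaw (Prod.fst ∘ z) (Prod.snd ∘ z)
  refine (prW_congr p fun ω => ?_).trans (prW_initSeg_eq_prod hμ1 hpair hn fun i => (u i, w i))
  simp only [initSeg, funext_iff, Prod.ext_iff, forall_and]

lemma prW_initSeg_ne_zero_of_ne_zero [Fintype β] {p : Ω → ℝ} {X : ℕ → Ω → α}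
    {Y : ℕ → Ω → β} {n : ℕ} {q : (Fin n → α) → (Fin n → β) → ℝ} (hq0 : ∀ u w, 0 ≤ q u w)
    (hq : ∀ u w, prW p (fun ω => initSeg X n ω = u ∧ initSeg Y n ω = w) = q u w)
    {u : Fin n → α} {w : Fin n → β} (h : q u w ≠ 0) :
    prW p (fun ω => initSeg X n ω = u) ≠ 0 := by
  rw [prW_eq_sum_prW_eq_and p (initSeg Y n)]
  simp only [@and_comm (initSeg Y n _ = _), hq]
  exact fun h0 => h ((Finset.sum_eq_zero_iff_of_nonneg fun w _ => hq0 u w).1 h0 w (mem_univ w))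

lemma cprW_le_initSeg_eq [Fintype α] {p : Ω → ℝ} {X : ℕ → Ω → α} {Y : ℕ → Ω → β} {S : Ω → ℕ}
    (hS : IsSTW X S) {n : ℕ} {q : (Fin n → α) → (Fin n → β) → ℝ}
    (hq : ∀ u w, prW p (fun ω => initSeg X n ω = u ∧ initSeg Y n ω = w) = q u w) (w : Fin n → β) :
    cprW p (fun ω => S ω ≤ n) (fun ω => initSeg Y n ω = w) =
      (∑ u, if StopsBy X S n u then q u w else 0) / ∑ u, q u w := by
  simp only [cprW, hS.le_iff_stopsBy n, prW_comp_and_eq_sum p (initSeg X n)]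
  rw [prW_eq_sum_prW_eq_and p (initSeg X n)]
  simp only [hq]

end PermInvTransfer

theorem perm_inv_transfer_general
    {Ω 𝒳 𝒴 : Type*} [Fintype Ω] [Fintype 𝒳] [Fintype 𝒴]
    (p : Ω → ℝ) (X : ℕ → Ω → 𝒳) (Y : ℕ → Ω → 𝒴) (κ : ℕ)
    (hiid : IIDPairs p X Y κ)
    (S : Ω → ℕ) (hS : IsSTW X S)
    (hperm : PermInvST p X S κ) :
    PermInvST p Y S κ := by
  intro y hy π
  rcases isEmpty_or_nonempty Ω with hΩ | ⟨⟨ω₀⟩⟩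
  · simp [cprW, prW]
  have : Nonempty 𝒳 := ⟨X 0 ω₀⟩
  have : Nonempty 𝒴 := ⟨Y 0 ω₀⟩
  obtain ⟨q, hq0, hq_perm, hq⟩ := hiid.exists_exchangeable_law hy
  have hstop : ∀ u w, q u w ≠ 0 → (StopsBy X S y.length (u ∘ π) ↔ StopsBy X S y.length u) :=
    fun u w hqu => stopsBy_comp_perm_iff hS hperm hy (prW_initSeg_ne_zero_of_ne_zero hq0 hq hqu)
      (prW_initSeg_ne_zero_of_ne_zero hq0 hq (w := w ∘ π) (by rwa [hq_perm]))
  have hden : ∑ u, q u (y.get ∘ π) = ∑ u, q u y.get := by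
    simpa using sum_ite_comp_perm π (r := fun u => q u (y.get ∘ π)) (A := fun _ => True)
      (fun u => hq_perm π u y.get) fun _ _ => Iff.rfl
  -- `extN_pathOf_iff` also matches `permNode y π`, so the permuted node is rewritten first.
  simp only [extN_pathOf_permNode_iff]
  simp only [extN_pathOf_iff, cprW_le_initSeg_eq hS hq]
  rw [sum_ite_comp_perm π (r := fun u => q u (y.get ∘ π)) (fun u => hq_perm π u y.get)
    fun u => hstop u y.get, hden]

/-- if `(X_i, Y_i)` are i.i.d. and `S` is a permutation invariant
stopping time w.r.t. `X`, then `S` is a permutation invariant (randomized)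
stopping time w.r.t. `Y`. -/
theorem perm_inv_transfer
    {Ω 𝒳 𝒴 : Type*} [Fintype Ω] [Fintype 𝒳] [Fintype 𝒴]
    (p : Ω → ℝ) (hp : IsProbW p) (X : ℕ → Ω → 𝒳) (Y : ℕ → Ω → 𝒴) (κ : ℕ)
    (hiid : IIDPairs p X Y κ)
    (S : Ω → ℕ) (hS : IsSTW X S) (hSb : ∀ ω, 1 ≤ S ω ∧ S ω ≤ κ)
    (hperm : PermInvST p X S κ) :
    PermInvST p Y S κ :=
  perm_inv_transfer_general p X Y κ hiid S hS hperm
end
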